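/- arXiv:2209.09527 — 9 statements merged into one kernel-verified Lean document; each statement's English description precedes it below -/
import Mathlib

section
/- Let Q be a set, let V1, V2 be disjoint finite sets of nodes, and let F1 : (V1 → Q) → (V1 → Q), F2 : (V2 → Q) → (V2 → Q) be automata networks. Let C be a finite set disjoint from V1 ∪ V2, partitioned as C = C1 ⊔ C2, let φ1 : C → V1 and φ2 : C → V2 be injective, and let F' be the glueing of F1 and F2 over C (with this data). Let X ⊆ V1 ∖ φ1(C) and Y ⊆ V2 ∖ φ2(C). Suppose (x^t)_{0 ≤ t ≤ T} is an (X ∪ φ1(C2))-pseudo-orbit of F1, (y^t)_{0 ≤ t ≤ T} is a (Y ∪ φ2(C1))-pseudo-orbit of F2, and for all 0 ≤ t ≤ T and all v ∈ C one has x^t_{φ1(v)} = y^t_{φ2(v)}. Define configurations z^t on V' by z^t_v = x^t_{α(v)} if α(v) ∈ V1 and z^t_v = y^t_{α(v)} if α(v) ∈ V2. Then (z^t)_{0 ≤ t ≤ T} is an (X ∪ Y)-pseudo-orbit of F'. -/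
/-!
The restriction `ρ1 (z^t)` agrees with `x^t` on all of `V1`: off the dowel this is the definition
of `z^t`, at `φ1(C1)` too, and at `φ1(C2)` it is the agreement of `x^t` and `y^t` on the dowel.
Hence `F'` acts on `z^t` at a node `v` with `α v ∈ V1` as `F1` acts on `x^t` at `α v`.
Every node of `V'` outside `X ∪ Y` is sent by `α` to a node where `x` follows `F1` or `y`
follows `F2`: the only nodes where this could fail are `φ1(C2)` and `φ2(C1)`, and by injectivity
of `φ1`, `φ2` these are not of the form `α v` on the corresponding side.
-/

section

variable {U Q : Type*}

structure IsGlueing (V1 V2 C C1 C2 V' : Set U) (φ1 φ2 α : U → U)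
    (ρ1 ρ2 F1 F2 F' : (U → Q) → (U → Q)) : Prop where
  -- `C` is kept apart from `C1 ∪ C2` so that swapping the two sides does not change it
  union_eq : C1 ∪ C2 = C
  disjoint : Disjoint C1 C2
  disjoint₁ : Disjoint C V1
  disjoint₂ : Disjoint C V2
  injOn₁ : Set.InjOn φ1 C
  injOn₂ : Set.InjOn φ2 C
  mapsTo₁ : Set.MapsTo φ1 C V1
  mapsTo₂ : Set.MapsTo φ2 C V2
  nodes_eq : V' = C ∪ (V1 \ φ1 '' C) ∪ (V2 \ φ2 '' C)
  α_of_mem₁ : ∀ v ∈ C1, α v = φ1 v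
  α_of_mem₂ : ∀ v ∈ C2, α v = φ2 v
  α_of_notMem : ∀ v, v ∉ C → α v = v
  ρ₁_image : ∀ x : U → Q, ∀ c ∈ C, ρ1 x (φ1 c) = x c
  ρ₁_of_notMem : ∀ x : U → Q, ∀ v, v ∉ φ1 '' C → ρ1 x v = x v
  ρ₂_image : ∀ x : U → Q, ∀ c ∈ C, ρ2 x (φ2 c) = x c
  ρ₂_of_notMem : ∀ x : U → Q, ∀ v, v ∉ φ2 '' C → ρ2 x v = x v
  eqOn₁ : ∀ x y : U → Q, Set.EqOn x y V1 → Set.EqOn (F1 x) (F1 y) V1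
  eqOn₂ : ∀ x y : U → Q, Set.EqOn x y V2 → Set.EqOn (F2 x) (F2 y) V2
  apply₁ : ∀ x : U → Q, ∀ v ∈ V', α v ∈ V1 → F' x v = F1 (ρ1 x) (α v)
  apply₂ : ∀ x : U → Q, ∀ v ∈ V', α v ∈ V2 → F' x v = F2 (ρ2 x) (α v)

def IsGluedConfig (V1 V2 V' : Set U) (α : U → U) (a b w : U → Q) : Prop :=
  (∀ v ∈ V', α v ∈ V1 → w v = a (α v)) ∧ (∀ v ∈ V', α v ∈ V2 → w v = b (α v))

theorem IsGluedConfig.symm {V1 V2 V' : Set U} {α : U → U} {a b w : U → Q}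
    (hw : IsGluedConfig V1 V2 V' α a b w) : IsGluedConfig V2 V1 V' α b a w :=
  And.symm hw

namespace IsGlueing

variable {V1 V2 C C1 C2 V' : Set U} {φ1 φ2 α : U → U}
  {ρ1 ρ2 F1 F2 F' : (U → Q) → (U → Q)}

theorem symm (hG : IsGlueing V1 V2 C C1 C2 V' φ1 φ2 α ρ1 ρ2 F1 F2 F') :
    IsGlueing V2 V1 C C2 C1 V' φ2 φ1 α ρ2 ρ1 F2 F1 F' where
  union_eq := Set.union_comm C2 C1 ▸ hG.union_eq
  disjoint := hG.disjoint.symm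
  disjoint₁ := hG.disjoint₂
  disjoint₂ := hG.disjoint₁
  injOn₁ := hG.injOn₂
  injOn₂ := hG.injOn₁
  mapsTo₁ := hG.mapsTo₂
  mapsTo₂ := hG.mapsTo₁
  nodes_eq := hG.nodes_eq.trans (Set.union_right_comm _ _ _)
  α_of_mem₁ := hG.α_of_mem₂
  α_of_mem₂ := hG.α_of_mem₁
  α_of_notMem := hG.α_of_notMem
  ρ₁_image := hG.ρ₂_image
  ρ₁_of_notMem := hG.ρ₂_of_notMem
  ρ₂_image := hG.ρ₁_image
  ρ₂_of_notMem := hG.ρ₁_of_notMem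
  eqOn₁ := hG.eqOn₂
  eqOn₂ := hG.eqOn₁
  apply₁ := hG.apply₂
  apply₂ := hG.apply₁

variable (hG : IsGlueing V1 V2 C C1 C2 V' φ1 φ2 α ρ1 ρ2 F1 F2 F')
include hG

theorem mem_of_mem_nodes {v : U} (hv : v ∈ V') :
    v ∈ C1 ∪ V1 \ φ1 '' C ∨ v ∈ C2 ∪ V2 \ φ2 '' C := by
  rw [hG.nodes_eq] at hv
  rw [← hG.union_eq] at hv ⊢
  simp only [Set.mem_union] at hv ⊢
  tauto

theorem glued_apply_of_mem₁ {a b w : U → Q} (hw : IsGluedConfig V1 V2 V' α a b w) {c : U}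
    (hc : c ∈ C1) : w c = a (φ1 c) := by
  have hcC : c ∈ C := hG.union_eq ▸ Or.inl hc
  have hcV' : c ∈ V' := hG.nodes_eq ▸ Or.inl (Or.inl hcC)
  rw [hw.1 c hcV' (hG.α_of_mem₁ c hc ▸ hG.mapsTo₁ hcC), hG.α_of_mem₁ c hc]

theorem glued_apply_of_mem_diff₁ {a b w : U → Q} (hw : IsGluedConfig V1 V2 V' α a b w) {u : U}
    (hu : u ∈ V1 \ φ1 '' C) : w u = a u := by
  have hα : α u = u := hG.α_of_notMem u fun huC => hG.disjoint₁.notMem_of_mem_left huC hu.1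
  have huV' : u ∈ V' := hG.nodes_eq ▸ Or.inl (Or.inr hu)
  rw [hw.1 u huV' (by rw [hα]; exact hu.1), hα]

theorem eqOn_ρ₁ {a b w : U → Q} (hab : ∀ c ∈ C, a (φ1 c) = b (φ2 c))
    (hw : IsGluedConfig V1 V2 V' α a b w) : Set.EqOn (ρ1 w) a V1 := by
  intro u hu
  by_cases hφ : u ∈ φ1 '' C
  · obtain ⟨c, hc, rfl⟩ := hφ
    rw [hG.ρ₁_image w c hc]
    rcases hG.union_eq ▸ hc with hc₁ | hc₂
    · exact hG.glued_apply_of_mem₁ hw hc₁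
    · rw [hG.symm.glued_apply_of_mem₁ hw.symm hc₂, hab c hc]
  · rw [hG.ρ₁_of_notMem w u hφ]
    exact hG.glued_apply_of_mem_diff₁ hw ⟨hu, hφ⟩

theorem apply_glued₁ {a b w : U → Q} (hab : ∀ c ∈ C, a (φ1 c) = b (φ2 c))
    (hw : IsGluedConfig V1 V2 V' α a b w) {v : U} (hv : v ∈ V') (hαv : α v ∈ V1) :
    F' w v = F1 a (α v) := by
  rw [hG.apply₁ w v hv hαv]
  exact hG.eqOn₁ _ _ (hG.eqOn_ρ₁ hab hw) hαv

theorem mapsTo_α₁ {X : Set U} (hX : X ⊆ V1 \ φ1 '' C) :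
    Set.MapsTo α ((C1 ∪ V1 \ φ1 '' C) \ X) (V1 \ (X ∪ φ1 '' C2)) := by
  have hC2 : C2 ⊆ C := hG.union_eq ▸ Set.subset_union_right
  rintro v ⟨hv₁ | hvV, hvX⟩
  · have hvC : v ∈ C := hG.union_eq ▸ Or.inl hv₁
    rw [hG.α_of_mem₁ v hv₁]
    refine ⟨hG.mapsTo₁ hvC, ?_⟩
    rintro (hX' | ⟨c, hc, hcv⟩)
    · exact (hX hX').2 ⟨v, hvC, rfl⟩
    · -- `φ1` is injective on the dowel, so `c = v` would lie in both `C1` and `C2`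
      exact hG.disjoint.notMem_of_mem_left hv₁ (hG.injOn₁ (hC2 hc) hvC hcv ▸ hc)
  · rw [hG.α_of_notMem v fun hvC => hG.disjoint₁.notMem_of_mem_left hvC hvV.1]
    exact ⟨hvV.1, fun h => h.elim hvX fun h' => hvV.2 (Set.image_mono hC2 h')⟩

end IsGlueing

end

/-- Automata networks are maps on total configurations `U → Q`; one on the node set `V ⊆ U`
depends only on, and is only read at, nodes of `V`. -/
theorem glueing_pseudo_orbit_general {U Q : Type*}
    (V1 V2 C1 C2 : Set U)
    (hCV1 : Disjoint (C1 ∪ C2) V1) (hCV2 : Disjoint (C1 ∪ C2) V2)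
    (hC12 : Disjoint C1 C2)
    (F1 F2 F' : (U → Q) → (U → Q))
    (hF1loc : ∀ x y : U → Q, (∀ v ∈ V1, x v = y v) → ∀ v ∈ V1, F1 x v = F1 y v)
    (hF2loc : ∀ x y : U → Q, (∀ v ∈ V2, x v = y v) → ∀ v ∈ V2, F2 x v = F2 y v)
    (φ1 φ2 : U → U)
    (hφ1inj : Set.InjOn φ1 (C1 ∪ C2)) (hφ2inj : Set.InjOn φ2 (C1 ∪ C2))
    (hφ1maps : Set.MapsTo φ1 (C1 ∪ C2) V1) (hφ2maps : Set.MapsTo φ2 (C1 ∪ C2) V2)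
    (V' : Set U)
    (hV' : V' = (C1 ∪ C2) ∪ (V1 \ φ1 '' (C1 ∪ C2)) ∪ (V2 \ φ2 '' (C1 ∪ C2)))
    (α : U → U)
    (hα1 : ∀ v ∈ C1, α v = φ1 v) (hα2 : ∀ v ∈ C2, α v = φ2 v)
    (hα3 : ∀ v, v ∉ C1 ∪ C2 → α v = v)
    (ρ1 ρ2 : (U → Q) → (U → Q))
    (hρ1C : ∀ (x : U → Q), ∀ c ∈ C1 ∪ C2, ρ1 x (φ1 c) = x c)
    (hρ1o : ∀ (x : U → Q), ∀ v, v ∉ φ1 '' (C1 ∪ C2) → ρ1 x v = x v)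
    (hρ2C : ∀ (x : U → Q), ∀ c ∈ C1 ∪ C2, ρ2 x (φ2 c) = x c)
    (hρ2o : ∀ (x : U → Q), ∀ v, v ∉ φ2 '' (C1 ∪ C2) → ρ2 x v = x v)
    (hF'1 : ∀ (x : U → Q), ∀ v ∈ V', α v ∈ V1 → F' x v = F1 (ρ1 x) (α v))
    (hF'2 : ∀ (x : U → Q), ∀ v ∈ V', α v ∈ V2 → F' x v = F2 (ρ2 x) (α v))
    (X Y : Set U)
    (hX : X ⊆ V1 \ φ1 '' (C1 ∪ C2)) (hY : Y ⊆ V2 \ φ2 '' (C1 ∪ C2))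
    (T : ℕ) (x y : ℕ → U → Q)
    (hx : ∀ t < T, ∀ v ∈ V1, v ∉ X ∪ φ1 '' C2 → x (t + 1) v = F1 (x t) v)
    (hy : ∀ t < T, ∀ v ∈ V2, v ∉ Y ∪ φ2 '' C1 → y (t + 1) v = F2 (y t) v)
    (hxy : ∀ t ≤ T, ∀ v ∈ C1 ∪ C2, x t (φ1 v) = y t (φ2 v))
    (z : ℕ → U → Q)
    (hz1 : ∀ t ≤ T, ∀ v ∈ V', α v ∈ V1 → z t v = x t (α v))
    (hz2 : ∀ t ≤ T, ∀ v ∈ V', α v ∈ V2 → z t v = y t (α v)) :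
    ∀ t < T, ∀ v ∈ V', v ∉ X ∪ Y → z (t + 1) v = F' (z t) v := by
  have hG : IsGlueing V1 V2 (C1 ∪ C2) C1 C2 V' φ1 φ2 α ρ1 ρ2 F1 F2 F' :=
    ⟨rfl, hC12, hCV1, hCV2, hφ1inj, hφ2inj, hφ1maps, hφ2maps, hV', hα1, hα2, hα3,
      hρ1C, hρ1o, hρ2C, hρ2o, hF1loc, hF2loc, hF'1, hF'2⟩
  have hz : ∀ t ≤ T, IsGluedConfig V1 V2 V' α (x t) (y t) (z t) :=
    fun t ht => ⟨hz1 t ht, hz2 t ht⟩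
  intro t ht v hv hvXY
  rcases hG.mem_of_mem_nodes hv with hv₁ | hv₂
  · obtain ⟨hαv, hαvX⟩ := hG.mapsTo_α₁ hX ⟨hv₁, fun h => hvXY (Or.inl h)⟩
    calc z (t + 1) v = x (t + 1) (α v) := hz1 (t + 1) ht v hv hαv
      _ = F1 (x t) (α v) := hx t ht (α v) hαv hαvX
      _ = F' (z t) v := (hG.apply_glued₁ (hxy t ht.le) (hz t ht.le) hv hαv).symm
  · obtain ⟨hαv, hαvY⟩ := hG.symm.mapsTo_α₁ hY ⟨hv₂, fun h => hvXY (Or.inr h)⟩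
    calc z (t + 1) v = y (t + 1) (α v) := hz2 (t + 1) ht v hv hαv
      _ = F2 (y t) (α v) := hy t ht (α v) hαv hαvY
      _ = F' (z t) v := by
        refine (hG.symm.apply_glued₁ (fun c hc => ?_) (hz t ht.le).symm hv hαv).symm
        exact (hxy t ht.le c hc).symm

/-- **Pseudo-orbit glueing** (Lemma `pseudo-orbit-glueing`).
Automata networks are modelled as maps on total configurations `U → Q`, where an
automata network on node set `V ⊆ U` only depends on (and is only read at) nodes of `V`
(hypotheses `hF1loc`, `hF2loc`).  The glueing `F'` of `F1` and `F2` over `C = C1 ∪ C2`,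
together with the maps `α` and `ρ1, ρ2`, is characterized by the hypotheses below,
following the paper's Definition of glueing.  If `(x^t)` is an `(X ∪ φ1(C2))`-pseudo-orbit
of `F1`, `(y^t)` is a `(Y ∪ φ2(C1))`-pseudo-orbit of `F2`, and they agree on the dowel `C`,
then the combined sequence `(z^t)` is an `(X ∪ Y)`-pseudo-orbit of `F'`. -/
theorem glueing_pseudo_orbit {U Q : Type*}
    (V1 V2 C1 C2 : Set U)
    (hV12 : Disjoint V1 V2)
    (hCV1 : Disjoint (C1 ∪ C2) V1) (hCV2 : Disjoint (C1 ∪ C2) V2)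
    (hC12 : Disjoint C1 C2)
    (F1 F2 F' : (U → Q) → (U → Q))
    (hF1loc : ∀ x y : U → Q, (∀ v ∈ V1, x v = y v) → ∀ v ∈ V1, F1 x v = F1 y v)
    (hF2loc : ∀ x y : U → Q, (∀ v ∈ V2, x v = y v) → ∀ v ∈ V2, F2 x v = F2 y v)
    (φ1 φ2 : U → U)
    (hφ1inj : Set.InjOn φ1 (C1 ∪ C2)) (hφ2inj : Set.InjOn φ2 (C1 ∪ C2))
    (hφ1maps : Set.MapsTo φ1 (C1 ∪ C2) V1) (hφ2maps : Set.MapsTo φ2 (C1 ∪ C2) V2)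
    (V' : Set U)
    (hV' : V' = (C1 ∪ C2) ∪ (V1 \ φ1 '' (C1 ∪ C2)) ∪ (V2 \ φ2 '' (C1 ∪ C2)))
    (α : U → U)
    (hα1 : ∀ v ∈ C1, α v = φ1 v) (hα2 : ∀ v ∈ C2, α v = φ2 v)
    (hα3 : ∀ v, v ∉ C1 ∪ C2 → α v = v)
    (ρ1 ρ2 : (U → Q) → (U → Q))
    (hρ1C : ∀ (x : U → Q), ∀ c ∈ C1 ∪ C2, ρ1 x (φ1 c) = x c)
    (hρ1o : ∀ (x : U → Q), ∀ v, v ∉ φ1 '' (C1 ∪ C2) → ρ1 x v = x v)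
    (hρ2C : ∀ (x : U → Q), ∀ c ∈ C1 ∪ C2, ρ2 x (φ2 c) = x c)
    (hρ2o : ∀ (x : U → Q), ∀ v, v ∉ φ2 '' (C1 ∪ C2) → ρ2 x v = x v)
    (hF'1 : ∀ (x : U → Q), ∀ v ∈ V', α v ∈ V1 → F' x v = F1 (ρ1 x) (α v))
    (hF'2 : ∀ (x : U → Q), ∀ v ∈ V', α v ∈ V2 → F' x v = F2 (ρ2 x) (α v))
    (X Y : Set U)
    (hX : X ⊆ V1 \ φ1 '' (C1 ∪ C2)) (hY : Y ⊆ V2 \ φ2 '' (C1 ∪ C2))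
    (T : ℕ) (x y : ℕ → U → Q)
    (hx : ∀ t < T, ∀ v ∈ V1, v ∉ X ∪ φ1 '' C2 → x (t + 1) v = F1 (x t) v)
    (hy : ∀ t < T, ∀ v ∈ V2, v ∉ Y ∪ φ2 '' C1 → y (t + 1) v = F2 (y t) v)
    (hxy : ∀ t ≤ T, ∀ v ∈ C1 ∪ C2, x t (φ1 v) = y t (φ2 v))
    (z : ℕ → U → Q)
    (hz1 : ∀ t ≤ T, ∀ v ∈ V', α v ∈ V1 → z t v = x t (α v))
    (hz2 : ∀ t ≤ T, ∀ v ∈ V', α v ∈ V2 → z t v = y t (α v)) :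
    ∀ t < T, ∀ v ∈ V', v ∉ X ∪ Y → z (t + 1) v = F' (z t) v :=
  glueing_pseudo_orbit_general V1 V2 C1 C2 hCV1 hCV2 hC12 F1 F2 F' hF1loc hF2loc φ1 φ2 hφ1inj hφ2inj
    hφ1maps hφ2maps V' hV' α hα1 hα2 hα3 ρ1 ρ2 hρ1C hρ1o hρ2C hρ2o hF'1 hF'2 X Y hX hY T x y hx hy
    hxy z hz1 hz2
end

section
/- Let F be an automata network over a finite alphabet Q_F on a finite node set V_F and G an automata network over a finite alphabet Q_G on a finite node set V_G, and suppose G simulates F via a block embedding φ with time constant T ≥ 1. Then for every configuration x of F, the transients satisfy τ_G(φ(x)) ≤ T·τ_F(x) and T·τ_F(x) < τ_G(φ(x)) + T, where τ_F(x) is the transient of x under F and τ_G(φ(x)) is the transient of φ(x) under G. -/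
/-!
Since `φ` is injective and `φ ∘ F = G^T ∘ φ`, a configuration `y` is `F`-periodic exactly when
`φ y` is `G`-periodic (a `G`-period `p` of `φ y` is also a `G^T`-period, and conversely a
`G^T`-period `p` is the `G`-period `T p`). As `φ (F^n x) = G^(T n) (φ x)`, this gives
`τ_G(φ x) ≤ T n ↔ τ_F(x) ≤ n` for all `n`, i.e. `τ_F(x) = ⌈τ_G(φ x) / T⌉`.
-/

/-- A block embedding of `V_F → Q_F` into `V_G → Q_G` (paper's Definition of block
simulation).  The blocks are the fibers `D_i = blk⁻¹ {i}` of a surjective map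
`blk : V_G → V_F` (so they are pairwise disjoint, cover `V_G`, and there is one block
for each node of `F`), and `pat i q` records the pattern `p_{i,q}` (its values outside
the block `D_i` are irrelevant).  Injectivity of `q ↦ p_{i,q}` is `pat_inj`. -/
structure BlockEmbedding (QF QG VF VG : Type*) where
  blk : VG → VF
  blk_surj : Function.Surjective blk
  pat : VF → QF → VG → QG
  pat_inj : ∀ i q q', (∀ w, blk w = i → pat i q w = pat i q' w) → q = q'

/-- The injective map `φ : (V_F → Q_F) → (V_G → Q_G)` induced by a block embedding:
`φ(x)` restricted to the block `D_i` equals the pattern `p_{i, x_i}`. -/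
def BlockEmbedding.toFun {QF QG VF VG : Type*} (B : BlockEmbedding QF QG VF VG)
    (x : VF → QF) : VG → QG :=
  fun w => B.pat (B.blk w) (x (B.blk w)) w

/-- The transient of a configuration `x` under `F`: the least `t ≥ 0` such that
`F^t(x)` is a periodic point of `F`. -/
noncomputable def transient {Q V : Type*} (F : (V → Q) → (V → Q)) (x : V → Q) : ℕ :=
  sInf {t | F^[t] x ∈ Function.periodicPts F}

open Function

namespace Function

variable {α β : Type*} {f : α → α} {x : α}

theorem exists_iterate_mem_periodicPts [Finite α] (f : α → α) (x : α) :
    ∃ t, f^[t] x ∈ periodicPts f := by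
  obtain ⟨m, n, hmn, heq⟩ :=
    Set.Finite.exists_lt_map_eq_of_forall_mem (f := (f^[·] x)) (fun _ => Set.mem_univ _)
      Set.finite_univ
  refine ⟨m, mk_mem_periodicPts (Nat.sub_pos_of_lt hmn) ?_⟩
  rw [IsPeriodicPt, IsFixedPt, ← iterate_add_apply, Nat.sub_add_cancel hmn.le, heq]

theorem iterate_mem_periodicPts_of_le {s t : ℕ} (hs : f^[s] x ∈ periodicPts f) (hst : s ≤ t) :
    f^[t] x ∈ periodicPts f := by
  obtain ⟨p, hp, hper⟩ := mem_periodicPts.mp hs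
  rw [← Nat.sub_add_cancel hst, iterate_add_apply]
  exact mk_mem_periodicPts hp (hper.apply_iterate _)

theorem mem_periodicPts_iterate_iff {T : ℕ} (hT : 0 < T) :
    x ∈ periodicPts f^[T] ↔ x ∈ periodicPts f := by
  constructor
  · rintro ⟨p, hp, hper⟩
    exact mk_mem_periodicPts (Nat.mul_pos hT hp) (by rwa [IsPeriodicPt, iterate_mul])
  · rintro ⟨p, hp, hper⟩
    exact mk_mem_periodicPts hp (hper.iterate T)

theorem Semiconj.mem_periodicPts_iff {φ : α → β} {g : β → β} (h : Semiconj φ f g)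
    (hφ : Injective φ) : φ x ∈ periodicPts g ↔ x ∈ periodicPts f := by
  constructor
  · rintro ⟨p, hp, hper⟩
    exact mk_mem_periodicPts hp (hφ (by rw [(h.iterate_right p).eq]; exact hper))
  · rintro ⟨p, hp, hper⟩
    exact mk_mem_periodicPts hp (hper.map h)

end Function

theorem BlockEmbedding.toFun_injective {QF QG VF VG : Type*} (B : BlockEmbedding QF QG VF VG) :
    Injective B.toFun := by
  intro x y h
  funext i
  refine B.pat_inj i _ _ fun w hw => ?_
  simpa [BlockEmbedding.toFun, hw] using congrFun h w

section Transient

variable {Q V QG VG : Type*}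

theorem transient_le_iff [Finite (V → Q)] {F : (V → Q) → (V → Q)} {x : V → Q} {t : ℕ} :
    transient F x ≤ t ↔ F^[t] x ∈ periodicPts F :=
  ⟨fun h => iterate_mem_periodicPts_of_le (Nat.sInf_mem (exists_iterate_mem_periodicPts F x)) h,
    fun h => Nat.sInf_le h⟩

theorem transient_le_mul_iff_of_semiconj [Finite (V → Q)] [Finite (VG → QG)]
    {F : (V → Q) → (V → Q)} {G : (VG → QG) → (VG → QG)} {φ : (V → Q) → (VG → QG)}
    (hφ : Injective φ) {T : ℕ} (hT : 0 < T) (hsim : Semiconj φ F G^[T]) (x : V → Q) (n : ℕ) :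
    transient G (φ x) ≤ T * n ↔ transient F x ≤ n := by
  rw [transient_le_iff, transient_le_iff, iterate_mul, ← (hsim.iterate_right n).eq,
    ← mem_periodicPts_iterate_iff hT, hsim.mem_periodicPts_iff hφ]

end Transient

/-- If `G` simulates `F` via a block embedding `φ` with time constant `T ≥ 1`
(alphabets and node sets finite), then the transients satisfy
`τ_G(φ(x)) ≤ T·τ_F(x)` and `T·τ_F(x) < τ_G(φ(x)) + T`. -/
theorem simulation_transient {QF QG VF VG : Type*}
    [Finite QF] [Finite QG] [Finite VF] [Finite VG]
    (F : (VF → QF) → (VF → QF)) (G : (VG → QG) → (VG → QG))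
    (B : BlockEmbedding QF QG VF VG) (T : ℕ) (hT : 1 ≤ T)
    (hsim : ∀ x, B.toFun (F x) = G^[T] (B.toFun x)) (x : VF → QF) :
    transient G (B.toFun x) ≤ T * transient F x ∧
      T * transient F x < transient G (B.toFun x) + T := by
  have key := transient_le_mul_iff_of_semiconj B.toFun_injective hT hsim x
  refine ⟨(key _).mpr le_rfl, ?_⟩
  cases ht : transient F x with
  | zero => omega
  | succ k =>
    have hk : T * k < transient G (B.toFun x) := lt_of_not_ge fun h =>
      absurd ((key k).mp h) (by omega)
    rw [Nat.mul_succ]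
    omega
end

section
/- Let V be a finite set, r : V → V → Prop a directed-edge relation on V, and let F : (V → Bool) → (V → Bool) be the associated conjunctive network: F(x)_v = true if and only if x_u = true for every u with r(u, v). Let x be a configuration lying on a periodic orbit, i.e. F^P(x) = x for some P ≥ 1, and let v ∈ V be a vertex admitting a closed walk of length L ≥ 1 from v to v (a sequence v = w_0, w_1, …, w_L = v with r(w_j, w_{j+1}) for all 0 ≤ j < L). Then F^L(x)_v = x_v. -/
/-! Along a walk `w`, conjunctivity gives `F^[n] y (w n) = true → y (w 0) = true`; for a closed
walk at `v` this says that the predicate `y v = true` is pulled back by `G = F^[L]`. A point `x`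
periodic under `F` is periodic under `G`, and a predicate pulled back by `G` propagates forward
along a periodic orbit of `G`, so `x v = true ↔ G x v = true`. -/

open Function

theorem apply_eq_true_of_iterate_walk {V : Type*} {r : V → V → Prop}
    {F : (V → Bool) → (V → Bool)}
    (hF : ∀ (x : V → Bool) (v : V), F x v = true ↔ ∀ u, r u v → x u = true)
    {w : ℕ → V} {n : ℕ} (hw : ∀ j < n, r (w j) (w (j + 1))) (y : V → Bool)
    (h : F^[n] y (w n) = true) : y (w 0) = true := by
  induction n with
  | zero => simpa using h
  | succ k ih =>
    refine ih (fun j hj => hw j (by omega)) ?_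
    rw [iterate_succ_apply', hF] at h
    exact h (w k) (hw k k.lt_succ_self)

theorem Function.IsPeriodicPt.apply_mem_of_preimage_subset {α : Type*} {f : α → α} {s : Set α}
    (hs : f ⁻¹' s ⊆ s) {n : ℕ} {x : α} (hx : IsPeriodicPt f n x) (hn : 0 < n) (h : x ∈ s) :
    f x ∈ s := by
  have hiter : ∀ m, f^[m] ⁻¹' s ⊆ s := by
    intro m
    induction m with
    | zero => exact subset_rfl
    | succ m ih => exact fun y hy => hs (@ih (f y) hy)
  obtain ⟨m, rfl⟩ : ∃ m, n = m + 1 := ⟨n - 1, by omega⟩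
  apply hiter m
  rwa [Set.mem_preimage, ← iterate_succ_apply, hx.eq]

theorem conjunctive_closed_walk_stable_general {V : Type*}
    (r : V → V → Prop) (F : (V → Bool) → (V → Bool))
    (hF : ∀ (x : V → Bool) (v : V), F x v = true ↔ ∀ u, r u v → x u = true)
    (x : V → Bool) (P : ℕ) (hP : 1 ≤ P) (hx : F^[P] x = x)
    (v : V) (L : ℕ)
    (w : ℕ → V) (hw0 : w 0 = v) (hwL : w L = v)
    (hstep : ∀ j < L, r (w j) (w (j + 1))) :
    F^[L] x v = x v := by
  have hpull : F^[L] ⁻¹' {y | y v = true} ⊆ {y | y v = true} := fun y hy => by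
    rw [Set.mem_preimage, Set.mem_ofPred_eq, ← hwL] at hy
    simpa [hw0] using apply_eq_true_of_iterate_walk hF hstep y hy
  have hperiodic : IsPeriodicPt F^[L] P x := IsPeriodicPt.iterate hx L
  exact Bool.eq_iff_iff.mpr ⟨fun h => hpull h, hperiodic.apply_mem_of_preimage_subset hpull hP⟩

/-- **Stability along closed walks in conjunctive networks.**
Let `F` be the conjunctive network of a directed-edge relation `r` on a finite set `V`
(`F(x)_v = true` iff `x_u = true` for every in-neighbour `u` of `v`).  If `x` lies on a
periodic orbit (`F^P(x) = x` for some `P ≥ 1`) and `v` admits a closed walk of length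
`L ≥ 1` from `v` to `v`, then `F^L(x)_v = x_v`. -/
theorem conjunctive_closed_walk_stable {V : Type*} [Finite V]
    (r : V → V → Prop) (F : (V → Bool) → (V → Bool))
    (hF : ∀ (x : V → Bool) (v : V), F x v = true ↔ ∀ u, r u v → x u = true)
    (x : V → Bool) (P : ℕ) (hP : 1 ≤ P) (hx : F^[P] x = x)
    (v : V) (L : ℕ) (hL : 1 ≤ L)
    (w : ℕ → V) (hw0 : w 0 = v) (hwL : w L = v)
    (hstep : ∀ j < L, r (w j) (w (j + 1))) :
    F^[L] x v = x v :=
  conjunctive_closed_walk_stable_general r F hF x P hP hx v L w hw0 hwL hstep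
end

section
/- Let F be a G_t-network on a finite node set V (with alphabet {0,1,2}, determined by a gate assignment g as in the context) and let F* be its associated Boolean conjunctive network. Let x : V → {0,1,2} and x* : V → {0,1} be configurations such that for every v ∈ V, if x_v ∈ {0,1} then x*_v = x_v. Then for every v ∈ V, if F(x)_v ∈ {0,1} then F*(x*)_v = F(x)_v. -/
/-! A gate of `F` outputs a value in `{0,1}` only if every input that `F*` reads at that node is
in `{0,1}` (both inputs for the two AND gates, the first one for `Λ`), and that output is then the
`∧` resp. the copy of those inputs. So agreement passes through each gate separately, which is a
finite check over the values of its inputs. -/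

/-- The gates of a `G_t`-network: each node is assigned either `AND_{0,1}`, `AND_2`
or `Λ` with two designated input nodes, or `Id` with one designated input node. -/
inductive GtGate (V : Type*) where
  | and01 : V → V → GtGate V
  | and2  : V → V → GtGate V
  | lam   : V → V → GtGate V
  | id    : V → GtGate V

/-- Semantics of the gates over the alphabet `{0,1,2}` (as `Fin 3`):
`AND_{0,1}(a,b) = 2` if `2 ∈ {a,b}`, else `1` if `a = b = 1`, else `0`;
`AND_2(a,b) = 2` if `2 ∈ {a,b}` or `a = b = 1`, else `0`;
`Λ(a,b) = 2` if `2 ∈ {a,b}`, else `a`; `Id(a) = a`. -/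
def GtGate.eval {V : Type*} : GtGate V → (V → Fin 3) → Fin 3
  | .and01 u w, x => if x u = 2 ∨ x w = 2 then 2 else if x u = 1 ∧ x w = 1 then 1 else 0
  | .and2 u w, x => if x u = 2 ∨ x w = 2 ∨ (x u = 1 ∧ x w = 1) then 2 else 0
  | .lam u w, x => if x u = 2 ∨ x w = 2 then 2 else x u
  | .id u, x => x u

/-- The `G_t`-network determined by a gate assignment `g`. -/
def gtNet {V : Type*} (g : V → GtGate V) : (V → Fin 3) → V → Fin 3 :=
  fun x v => (g v).eval x

/-- Boolean semantics of the gates for the associated conjunctive network. -/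
def GtGate.evalBool {V : Type*} : GtGate V → (V → Bool) → Bool
  | .and01 u w, y => y u && y w
  | .and2 u w, y => y u && y w
  | .lam u _, y => y u
  | .id u, y => y u

/-- The Boolean conjunctive network associated to a `G_t`-network. -/
def gtConj {V : Type*} (g : V → GtGate V) : (V → Bool) → V → Bool :=
  fun y v => (g v).evalBool y

def AgreesWith (a : Fin 3) (p : Bool) : Prop :=
  a ≠ 2 → a = if p then 1 else 0

instance (a : Fin 3) (p : Bool) : Decidable (AgreesWith a p) := by
  unfold AgreesWith; infer_instance

theorem AgreesWith.and01 {a b : Fin 3} {p q : Bool} :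
    AgreesWith a p → AgreesWith b q →
      AgreesWith (if a = 2 ∨ b = 2 then 2 else if a = 1 ∧ b = 1 then 1 else 0) (p && q) := by
  revert a b p q; decide

theorem AgreesWith.and2 {a b : Fin 3} {p q : Bool} :
    AgreesWith a p → AgreesWith b q →
      AgreesWith (if a = 2 ∨ b = 2 ∨ (a = 1 ∧ b = 1) then 2 else 0) (p && q) := by
  revert a b p q; decide

theorem AgreesWith.lam {a b : Fin 3} {p : Bool} :
    AgreesWith a p → AgreesWith (if a = 2 ∨ b = 2 then 2 else a) p := by
  revert a b p; decide

theorem GtGate.eval_agreesWith {V : Type*} (c : GtGate V) {x : V → Fin 3} {xs : V → Bool}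
    (h : ∀ v, AgreesWith (x v) (xs v)) : AgreesWith (c.eval x) (c.evalBool xs) := by
  cases c with
  | and01 u w => exact (h u).and01 (h w)
  | and2 u w => exact (h u).and2 (h w)
  | lam u _ => exact (h u).lam
  | id u => exact h u

theorem gt_conj_agreement_general {V : Type*} (g : V → GtGate V)
    (x : V → Fin 3) (xs : V → Bool)
    (h : ∀ v, x v ≠ 2 → x v = if xs v then 1 else 0) :
    ∀ v, gtNet g x v ≠ 2 → gtNet g x v = if gtConj g xs v then 1 else 0 :=
  fun v => (g v).eval_agreesWith h

/-- **`G_t`-networks project onto their conjunctive networks** (paper's Lemma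
`superconjunctive`).  Encoding Booleans into `{0,1} ⊆ {0,1,2}` by `true ↦ 1`,
`false ↦ 0`: if `x` and `x*` agree on all nodes where `x` is not in state `2`, then
after one step `F(x)` and `F*(x*)` agree on all nodes where `F(x)` is not in state `2`. -/
theorem gt_conj_agreement {V : Type*} [Finite V] (g : V → GtGate V)
    (x : V → Fin 3) (xs : V → Bool)
    (h : ∀ v, x v ≠ 2 → x v = if xs v then 1 else 0) :
    ∀ v, gtNet g x v ≠ 2 → gtNet g x v = if gtConj g xs v then 1 else 0 :=
  gt_conj_agreement_general g x xs h
end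

section
/- Let F be a G_t-network on a finite node set V with alphabet {0,1,2} (determined by a gate assignment g as in the context), and let r be its dependency relation: r(u, v) holds if and only if u is one of the designated input nodes of the gate at v (both inputs for AND_{0,1}, AND_2 and Λ gates, the single input for Id gates). Let x be a configuration with F^P(x) = x for some P ≥ 1, and let v ∈ V admit a closed walk of length L ≥ 1 from v to v with respect to r. Then x_v = 2 if and only if F^L(x)_v = 2. -/
/-- The dependency relation of a `G_t`-network: `gtDep g u v` holds iff `u` is one of
the designated input nodes of the gate at `v`. -/
def gtDep {V : Type*} (g : V → GtGate V) (u v : V) : Prop :=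
  match g v with
  | .and01 a b => u = a ∨ u = b
  | .and2 a b => u = a ∨ u = b
  | .lam a b => u = a ∨ u = b
  | .id a => u = a

/-! State `2` is absorbing for every gate, so it spreads forward along dependency edges;
along a closed walk through `v` it therefore returns to `v` after every `L` steps. On a
periodic orbit, `x` itself is reached again after `P` rounds of `L` steps, which gives the
converse. -/

section

variable {V : Type*} (g : V → GtGate V)

theorem gtNet_eq_two_of_gtDep {y : V → Fin 3} {u v : V} (h : gtDep g u v) (hy : y u = 2) :
    gtNet g y v = 2 := by
  unfold gtDep at h
  unfold gtNet
  cases hg : g v <;> rw [hg] at h <;> rcases h with rfl | rfl <;> simp [GtGate.eval, hy]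

theorem iterate_gtNet_eq_two_of_walk {y : V → Fin 3} (L : ℕ) (w : ℕ → V)
    (hstep : ∀ j < L, gtDep g (w j) (w (j + 1))) (hy : y (w 0) = 2) :
    (gtNet g)^[L] y (w L) = 2 := by
  induction L with
  | zero => exact hy
  | succ n ih =>
    rw [Function.iterate_succ_apply']
    exact gtNet_eq_two_of_gtDep g (hstep n n.lt_succ_self)
      (ih fun j hj => hstep j (Nat.lt_succ_of_lt hj))

theorem mapsTo_iterate_gtNet_of_closed_walk {v : V} (L : ℕ) (w : ℕ → V)
    (hw0 : w 0 = v) (hwL : w L = v) (hstep : ∀ j < L, gtDep g (w j) (w (j + 1))) :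
    Set.MapsTo (gtNet g)^[L] {y | y v = 2} {y | y v = 2} := by
  intro y (hy : y v = 2)
  subst hw0
  show _ = 2
  rw [← hwL]
  exact iterate_gtNet_eq_two_of_walk g L w hstep hy

end

theorem gt_state_two_closed_walk_general {V : Type*} (g : V → GtGate V)
    (x : V → Fin 3) (P : ℕ) (hP : 1 ≤ P) (hx : (gtNet g)^[P] x = x)
    (v : V) (L : ℕ)
    (w : ℕ → V) (hw0 : w 0 = v) (hwL : w L = v)
    (hstep : ∀ j < L, gtDep g (w j) (w (j + 1))) :
    (x v = 2 ↔ (gtNet g)^[L] x v = 2) := by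
  have hmaps := mapsTo_iterate_gtNet_of_closed_walk g L w hw0 hwL hstep
  refine ⟨fun h => hmaps h, fun h => ?_⟩
  have hreturn : ((gtNet g)^[L])^[P] x = x := by
    rw [← Function.iterate_mul, mul_comm]
    exact Function.IsPeriodicPt.mul_const hx L
  have hspread := hmaps.iterate (P - 1) h
  rwa [← Function.iterate_succ_apply, Nat.succ_eq_add_one, Nat.sub_add_cancel hP,
    hreturn] at hspread

/-- On periodic orbits of a `G_t`-network, the presence of state `2` is stable along
closed walks of the dependency relation: if `F^P(x) = x` for some `P ≥ 1` and `v` admits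
a closed walk of length `L ≥ 1` from `v` to `v`, then `x_v = 2 ↔ F^L(x)_v = 2`. -/
theorem gt_state_two_closed_walk {V : Type*} [Finite V] (g : V → GtGate V)
    (x : V → Fin 3) (P : ℕ) (hP : 1 ≤ P) (hx : (gtNet g)^[P] x = x)
    (v : V) (L : ℕ) (hL : 1 ≤ L)
    (w : ℕ → V) (hw0 : w 0 = v) (hwL : w L = v)
    (hstep : ∀ j < L, gtDep g (w j) (w (j + 1))) :
    (x v = 2 ↔ (gtNet g)^[L] x v = 2) :=
  gt_state_two_closed_walk_general g x P hP hx v L w hw0 hwL hstep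
end

section
/- There is a finite alphabet Q (independent of n) such that for every integer n ≥ 1 there exists an automata network F : ({1,…,n} → Q) → ({1,…,n} → Q) with the locality property that F(x)_v is determined by the restriction of x to {v−1, v, v+1} ∩ {1,…,n}, and such that: (i) F has a periodic configuration whose least period is at least 2^n; (ii) F has at least 2^n fixed points; (iii) there is a configuration x whose transient is at least 2^n (i.e. F^t(x) is not periodic for all t < 2^n); and (iv) there is a periodic configuration y such that at least 2^n distinct configurations z satisfy F^t(z) = y for some t ≥ 0. -/
/-!
Each cell of the path runs one bit of a ripple-carry binary counter: cell `0` flips at every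
step, and cell `i + 1` flips one step after cell `i` falls from `1` to `0`, which cell `i`
detects by remembering its previous bit. The carry thus reaches cell `i` with a delay of `i`
steps, so at time `t` cell `i` shows bit `i` of `t + n - i`, and the counter has least period
`2 ^ n`. A flag that a cell erases the first time it falls keeps the top cell out of every
periodic orbit until time `2 ^ n`. Two further kinds of cells, frozen ones and ones decaying
into a frozen state, supply the `2 ^ n` fixed points and the `2 ^ n`-element basin.
-/

open Function

theorem Nat.testBit_succ_eq_xor (k j : ℕ) :
    (k + 1).testBit j = (k.testBit j ^^ decide (2 ^ j ∣ k + 1)) := by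
  by_cases h : 2 ^ j ∣ k + 1
  · simp only [Nat.testBit_eq_decide_div_mod_eq, Nat.succ_div_of_dvd h, h]
    rcases Nat.mod_two_eq_zero_or_one (k / 2 ^ j) with hk | hk <;> simp [Nat.add_mod, hk]
  · simp [Nat.testBit_eq_decide_div_mod_eq, Nat.succ_div, h]

theorem Nat.testBit_and_not_testBit_succ (k i : ℕ) :
    (k.testBit i && !(k + 1).testBit i) = decide (2 ^ (i + 1) ∣ k + 1) := by
  have hdvd : 2 ^ (i + 1) ∣ k + 1 ↔ 2 ^ i ∣ k + 1 ∧ 2 ∣ (k + 1) / 2 ^ i := by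
    rw [pow_succ]
    refine ⟨fun h => ?_, fun ⟨h, h2⟩ => (Nat.dvd_div_iff_mul_dvd h).1 h2⟩
    have h' := (dvd_mul_right _ _).trans h
    exact ⟨h', (Nat.dvd_div_iff_mul_dvd h').2 h⟩
  by_cases h : 2 ^ i ∣ k + 1
  · simp only [hdvd, Nat.testBit_eq_decide_div_mod_eq, Nat.succ_div_of_dvd h, h]
    rcases Nat.mod_two_eq_zero_or_one (k / 2 ^ i) with hk | hk <;>
      simp [Nat.add_mod, hk, Nat.dvd_iff_mod_eq_zero]
  · simp [hdvd, Nat.testBit_eq_decide_div_mod_eq, Nat.succ_div, h]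

theorem Nat.forall_lt_not_dvd_add_one_iff {N t : ℕ} (hN : 0 < N) :
    (∀ s < t, ¬ N ∣ s + 1) ↔ t < N := by
  refine ⟨fun h => ?_, fun h s hs hdvd => ?_⟩
  · by_contra! ht
    exact h (N - 1) (by omega) (by rw [Nat.sub_add_cancel hN])
  · exact absurd (Nat.le_of_dvd s.succ_pos hdvd) (by omega)

namespace Equiv

variable {α β : Type*} (e : α ≃ β) (f : α → α)

theorem iterate_conj_apply (t : ℕ) (x : α) : (e.conj f)^[t] (e x) = e (f^[t] x) :=
  ((e.semiconj_conj f).iterate_right t x).symm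

theorem isPeriodicPt_conj_apply_iff {t : ℕ} {x : α} :
    IsPeriodicPt (e.conj f) t (e x) ↔ IsPeriodicPt f t x := by
  simp only [IsPeriodicPt, IsFixedPt, iterate_conj_apply, e.apply_eq_iff_eq]

theorem mem_periodicPts_conj_apply_iff {x : α} :
    e x ∈ periodicPts (e.conj f) ↔ x ∈ periodicPts f := by
  simp only [mem_periodicPts, isPeriodicPt_conj_apply_iff]

theorem minimalPeriod_conj_apply (x : α) : minimalPeriod (e.conj f) (e x) = minimalPeriod f x :=
  minimalPeriod_eq_minimalPeriod_iff.2 fun _ => e.isPeriodicPt_conj_apply_iff f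

end Equiv

def IsRichPathNetwork {α : Type*} (n : ℕ) (F : (Fin n → α) → (Fin n → α)) : Prop :=
  (∀ (x y : Fin n → α) (v : Fin n),
      (∀ u : Fin n, Nat.dist (u : ℕ) (v : ℕ) ≤ 1 → x u = y u) → F x v = F y v) ∧
    (∃ x, x ∈ periodicPts F ∧ 2 ^ n ≤ minimalPeriod F x) ∧
    (2 ^ n ≤ Nat.card {x : Fin n → α // F x = x}) ∧
    (∃ x, ∀ t, t < 2 ^ n → F^[t] x ∉ periodicPts F) ∧
    (∃ y, y ∈ periodicPts F ∧
      2 ^ n ≤ Nat.card {z : Fin n → α // ∃ t : ℕ, F^[t] z = y})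

theorem IsRichPathNetwork.conj {α β : Type*} {n : ℕ} {F : (Fin n → α) → (Fin n → α)}
    (hF : IsRichPathNetwork n F) (e : α ≃ β) :
    IsRichPathNetwork n (((Equiv.refl (Fin n)).arrowCongr e).conj F) := by
  set E := (Equiv.refl (Fin n)).arrowCongr e
  obtain ⟨hloc, ⟨x, hx, hper⟩, hfix, ⟨w, hw⟩, ⟨y, hy, hbasin⟩⟩ := hF
  refine ⟨fun x x' v h => ?_, ⟨E x, ?_⟩, ?_, ⟨E w, fun t ht => ?_⟩, ⟨E y, ?_⟩⟩
  · show e (F (e.symm ∘ x) v) = e (F (e.symm ∘ x') v)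
    rw [hloc (e.symm ∘ x) (e.symm ∘ x') v fun u hu => congrArg e.symm (h u hu)]
  · rw [E.mem_periodicPts_conj_apply_iff, E.minimalPeriod_conj_apply]
    exact ⟨hx, hper⟩
  · refine hfix.trans_eq (Nat.card_congr (E.subtypeEquiv fun x => ?_))
    rw [Equiv.conj_apply, E.symm_apply_apply, E.apply_eq_iff_eq]
  · rw [E.iterate_conj_apply, E.mem_periodicPts_conj_apply_iff]
    exact hw t ht
  · refine ⟨(E.mem_periodicPts_conj_apply_iff _).2 hy,
      hbasin.trans_eq (Nat.card_congr (E.subtypeEquiv fun z => ?_))⟩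
    simp only [E.iterate_conj_apply, E.apply_eq_iff_eq]

namespace RippleCounter

inductive Cell
  | counter (cur prev alive : Bool)
  | frozen (b : Bool)
  | decaying (b : Bool)

instance : Finite Cell :=
  Finite.of_injective
    (fun
      | .counter c p a => Sum.inl (c, p, a)
      | .frozen b => Sum.inr (Sum.inl b)
      | .decaying b => Sum.inr (Sum.inr b) : Cell → (Bool × Bool × Bool) ⊕ Bool ⊕ Bool)
    (by rintro (_ | _ | _) (_ | _ | _) h <;> simp_all)

def Cell.falls : Cell → Bool
  | .counter cur prev _ => prev && !cur
  | _ => false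

def Cell.step (carry : Bool) : Cell → Cell
  | .counter cur prev alive => .counter (cur ^^ carry) cur (alive && !(prev && !cur))
  | .frozen b => .frozen b
  | .decaying _ => .frozen false

def carryIn {n : ℕ} (x : Fin n → Cell) : Fin n → Bool
  | ⟨0, _⟩ => true
  | ⟨j + 1, h⟩ => (x ⟨j, by omega⟩).falls

def net (n : ℕ) (x : Fin n → Cell) (v : Fin n) : Cell := (x v).step (carryIn x v)

theorem net_local (n : ℕ) (x y : Fin n → Cell) (v : Fin n)
    (h : ∀ u : Fin n, Nat.dist (u : ℕ) (v : ℕ) ≤ 1 → x u = y u) :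
    net n x v = net n y v := by
  have hv : x v = y v := h v (by simp)
  obtain ⟨_ | j, hj⟩ := v
  · simp only [net, carryIn, hv]
  · have hj' : x ⟨j, by omega⟩ = y ⟨j, by omega⟩ := h _ (by simp [Nat.dist])
    simp only [net, carryIn, hv, hj']

def clock (n : ℕ) (alive : Bool) (t : ℕ) (i : Fin n) : Cell :=
  .counter ((t + n - i).testBit i) ((t + n - i - 1).testBit i)
    (alive && decide (∀ s < t, ¬ 2 ^ ((i : ℕ) + 1) ∣ s + n - i))

theorem carryIn_clock (n : ℕ) (alive : Bool) (t : ℕ) (i : Fin n) :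
    carryIn (clock n alive t) i = decide (2 ^ (i : ℕ) ∣ t + n - i + 1) := by
  obtain ⟨_ | j, hj⟩ := i
  · simp [carryIn]
  · have hprev : t + n - j - 1 = t + n - (j + 1) := by omega
    have hcur : t + n - j = t + n - (j + 1) + 1 := by omega
    simp only [carryIn, clock, Cell.falls]
    rw [hprev, hcur, Nat.testBit_and_not_testBit_succ]

theorem net_clock (n : ℕ) (alive : Bool) (t : ℕ) :
    net n (clock n alive t) = clock n alive (t + 1) := by
  funext i
  have hcur : (t + 1 + n - i).testBit i =
      ((t + n - i).testBit i ^^ decide (2 ^ (i : ℕ) ∣ t + n - i + 1)) := by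
    rw [← Nat.testBit_succ_eq_xor]; congr 1; omega
  have hprev : t + 1 + n - i - 1 = t + n - i := by omega
  have hfalls := Nat.testBit_and_not_testBit_succ (t + n - i - 1) i
  rw [Nat.sub_add_cancel (by omega : 1 ≤ t + n - i)] at hfalls
  simp only [net, carryIn_clock, clock, Cell.step, hcur, hprev, hfalls, Nat.forall_lt_succ_right,
    Bool.decide_and, decide_not, Bool.and_assoc]

theorem iterate_net_clock (n : ℕ) (alive : Bool) (t : ℕ) :
    (net n)^[t] (clock n alive 0) = clock n alive t := by
  induction t with
  | zero => rfl
  | succ t ih => rw [iterate_succ_apply', ih, net_clock]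

theorem clock_false_add_two_pow (n t : ℕ) : clock n false (t + 2 ^ n) = clock n false t := by
  funext i
  have := i.isLt
  have := Nat.two_pow_pos n
  have hcur : t + 2 ^ n + n - i = 2 ^ n + (t + n - i) := by omega
  have hprev : 2 ^ n + (t + n - i) - 1 = 2 ^ n + (t + n - i - 1) := by omega
  simp only [clock, hcur, hprev, Nat.testBit_two_pow_add_gt i.isLt, Bool.false_and]

theorem clock_last (m : ℕ) (alive : Bool) (t : ℕ) :
    clock (m + 1) alive t (Fin.last m) =
      .counter ((t + 1).testBit m) (t.testBit m) (alive && decide (t < 2 ^ (m + 1))) := by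
  have hshift (s : ℕ) : s + (m + 1) - m = s + 1 := by omega
  simp only [clock, Fin.val_last, hshift, Nat.add_sub_cancel,
    Nat.forall_lt_not_dvd_add_one_iff (Nat.two_pow_pos (m + 1))]

theorem minimalPeriod_net_clock (m : ℕ) :
    minimalPeriod (net (m + 1)) (clock (m + 1) false 0) = 2 ^ (m + 1) := by
  refine minimalPeriod_eq_prime_pow (fun h => ?_) ?_
  · have hlast := congrFun ((iterate_net_clock _ _ _).symm.trans h.eq) (Fin.last m)
    rw [clock_last, clock_last] at hlast
    obtain ⟨hcur, -⟩ := Cell.counter.inj hlast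
    rw [Nat.testBit_two_pow_add_eq, zero_add] at hcur
    exact Bool.not_ne_self _ hcur
  · exact (iterate_net_clock _ _ _).trans (by simpa using clock_false_add_two_pow (m + 1) 0)

theorem iterate_net_clock_notMem_periodicPts (m t : ℕ) (ht : t < 2 ^ (m + 1)) :
    (net (m + 1))^[t] (clock (m + 1) true 0) ∉ periodicPts (net (m + 1)) := by
  rintro ⟨p, hp, hper⟩
  have h := (hper.mul_const (2 ^ (m + 1))).eq
  rw [← iterate_add_apply, iterate_net_clock, iterate_net_clock] at h
  have hlast := congrFun h (Fin.last m)
  rw [clock_last, clock_last] at hlast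
  obtain ⟨-, -, halive⟩ := Cell.counter.inj hlast
  have hle : 2 ^ (m + 1) ≤ p * 2 ^ (m + 1) := Nat.le_mul_of_pos_left _ hp
  simp only [Bool.true_and, decide_eq_decide] at halive
  omega

theorem isFixedPt_net_frozen (n : ℕ) (b : Fin n → Bool) :
    IsFixedPt (net n) fun v => .frozen (b v) :=
  rfl

theorem two_pow_le_card_fixedPoints (n : ℕ) :
    2 ^ n ≤ Nat.card {x : Fin n → Cell // net n x = x} := by
  calc 2 ^ n = Nat.card (Fin n → Bool) := by simp
  _ ≤ _ := Nat.card_le_card_of_injective (fun b => ⟨_, isFixedPt_net_frozen n b⟩)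
      fun b b' h => funext fun v => by simpa using congrFun (congrArg Subtype.val h) v

theorem two_pow_le_card_basin (n : ℕ) :
    2 ^ n ≤ Nat.card {z : Fin n → Cell // ∃ t, (net n)^[t] z = fun _ => .frozen false} := by
  calc 2 ^ n = Nat.card (Fin n → Bool) := by simp
  _ ≤ _ := Nat.card_le_card_of_injective (fun b => ⟨fun v => .decaying (b v), 1, rfl⟩)
      fun b b' h => funext fun v => by simpa using congrFun (congrArg Subtype.val h) v

theorem isRichPathNetwork_net (n : ℕ) (hn : 1 ≤ n) : IsRichPathNetwork n (net n) := by
  obtain ⟨m, rfl⟩ : ∃ m, n = m + 1 := ⟨n - 1, by omega⟩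
  refine ⟨net_local _, ⟨clock _ false 0, ?_, (minimalPeriod_net_clock m).ge⟩,
    two_pow_le_card_fixedPoints _, ⟨clock _ true 0, iterate_net_clock_notMem_periodicPts m⟩,
    ⟨_, mk_mem_periodicPts one_pos ((isFixedPt_net_frozen _ fun _ => false).isPeriodicPt 1),
      two_pow_le_card_basin _⟩⟩
  rw [← minimalPeriod_pos_iff_mem_periodicPts, minimalPeriod_net_clock]
  positivity

end RippleCounter

/-- **Rich dynamics on bounded-degree path networks** (paper's Proposition on
bounded-degree dynamics).  There is a finite alphabet `Q = Fin k` (independent of `n`)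
such that for every `n ≥ 1` there is an automata network `F` on nodes `{1,…,n}` (as
`Fin n`) whose behaviour at node `v` only depends on the restriction of the
configuration to `{v−1, v, v+1}` (nodes at distance ≤ 1 on the path), and which has:
(i) a periodic configuration of least period at least `2^n`;
(ii) at least `2^n` fixed points;
(iii) a configuration with transient at least `2^n` (no iterate before time `2^n` is
periodic); and
(iv) a periodic configuration `y` reached (in some time `t ≥ 0`) from at least `2^n`
distinct configurations. -/
theorem bounded_degree_rich_dynamics :
    ∃ k : ℕ, ∀ n : ℕ, 1 ≤ n →
      ∃ F : (Fin n → Fin k) → (Fin n → Fin k),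
        (∀ (x y : Fin n → Fin k) (v : Fin n),
            (∀ u : Fin n, Nat.dist (u : ℕ) (v : ℕ) ≤ 1 → x u = y u) → F x v = F y v) ∧
        (∃ x, x ∈ Function.periodicPts F ∧ 2 ^ n ≤ Function.minimalPeriod F x) ∧
        (2 ^ n ≤ Nat.card {x : Fin n → Fin k // F x = x}) ∧
        (∃ x, ∀ t, t < 2 ^ n → F^[t] x ∉ Function.periodicPts F) ∧
        (∃ y, y ∈ Function.periodicPts F ∧
          2 ^ n ≤ Nat.card {z : Fin n → Fin k // ∃ t : ℕ, F^[t] z = y}) :=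
  ⟨Nat.card RippleCounter.Cell, fun n hn =>
    ⟨_, (RippleCounter.isRichPathNetwork_net n hn).conj (Finite.equivFin RippleCounter.Cell)⟩⟩
end

section
/- For every integer n ≥ 1 there exists an automata network H : ({1,…,n} → Q) → ({1,…,n} → Q) over the alphabet Q = {0,1} × {0,1} × {0,1} (so |Q| = 8) such that for every configuration c, every integer k with 1 ≤ k < 2^n, and every node v ∈ {1,…,n}, there exists an integer t ≥ 1 with H^{k·t}(c)_v ≠ c_v. -/
/-!
Let the `n` nodes jointly store a counter `x ∈ ℤ/2^n`: node `v` keeps bit `v` of `x` and a copy of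
the top bit of `x`, and the network increments the counter. After `s ≥ 1` steps the counter reads
`x₀ + s`, whatever the (possibly inconsistent) initial configuration was. Since `gcd(k, 2^n)` is a
proper divisor of `2^n`, some multiple `k t` is `2^(n-1)` modulo `2^n`, so at times `k t` and `2 k t`
the top bit, which every node carries, takes opposite values; at one of the two times every node
differs from its initial state.
-/

open Function

theorem Nat.exists_mul_modEq_of_gcd_dvd {k N d : ℕ} (hN : k.gcd N < N) (hd : k.gcd N ∣ d) :
    ∃ t, 0 < t ∧ k * t ≡ d [MOD N] := by
  obtain ⟨m, -, hm⟩ := Nat.exists_mul_mod_eq_gcd hN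
  obtain ⟨e, rfl⟩ := hd
  have hkm : k * m ≡ k.gcd N [MOD N] := by rw [Nat.ModEq, hm, Nat.mod_eq_of_lt hN]
  have hshift : k * (m * e + N) ≡ k * (m * e) [MOD N] := by
    simp [Nat.ModEq, mul_add]
  exact ⟨m * e + N, by omega, hshift.trans (by simpa only [mul_assoc] using hkm.mul_right e)⟩

theorem Nat.exists_mul_modEq_two_pow_pred {n k : ℕ} (hk : 0 < k) (hkn : k < 2 ^ n) :
    ∃ t, 0 < t ∧ k * t ≡ 2 ^ (n - 1) [MOD 2 ^ n] := by
  obtain ⟨i, hin, hgcd⟩ := (Nat.dvd_prime_pow Nat.prime_two).1 (Nat.gcd_dvd_right k (2 ^ n))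
  have hi : i < n := by
    refine hin.lt_of_ne fun hi => hkn.not_ge (Nat.le_of_dvd hk ?_)
    exact hi ▸ hgcd ▸ Nat.gcd_dvd_left k (2 ^ n)
  apply Nat.exists_mul_modEq_of_gcd_dvd
  · rw [hgcd]; exact Nat.pow_lt_pow_right (by norm_num) hi
  · rw [hgcd]; exact Nat.pow_dvd_pow 2 (by omega)

section CounterNetwork

variable {A X : Type*} [AddMonoidWithOne A] [Nonempty A]

noncomputable def counterNetwork (e : A → X) (c : X) : X :=
  e (invFun e c + 1)

theorem counterNetwork_iterate {e : A → X} (he : Injective e) (c : X) {s : ℕ} (hs : s ≠ 0) :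
    (counterNetwork e)^[s] c = e (invFun e c + s) := by
  obtain ⟨s, rfl⟩ := Nat.exists_eq_succ_of_ne_zero hs
  induction s with
  | zero => simp [counterNetwork]
  | succ s ih =>
    rw [iterate_succ_apply', ih (Nat.succ_ne_zero s), counterNetwork, leftInverse_invFun he,
      add_assoc]
    push_cast
    rfl

end CounterNetwork

def counterState (n : ℕ) (x : ZMod (2 ^ n)) (v : Fin n) : Bool × Bool × Bool :=
  (x.val.testBit v, x.val.testBit (n - 1), false)

theorem counterState_injective (n : ℕ) : Injective (counterState n) := by
  intro x y hxy
  refine ZMod.val_injective _ (Nat.eq_of_testBit_eq fun i => ?_)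
  by_cases hi : i < n
  · exact congrArg Prod.fst (congrFun hxy ⟨i, hi⟩)
  · have hpow : 2 ^ n ≤ 2 ^ i := Nat.pow_le_pow_right (by norm_num) (by omega)
    rw [Nat.testBit_eq_false_of_lt ((ZMod.val_lt x).trans_le hpow),
      Nat.testBit_eq_false_of_lt ((ZMod.val_lt y).trans_le hpow)]

theorem ZMod.testBit_val_add_two_pow_pred {n : ℕ} (hn : n ≠ 0) (x : ZMod (2 ^ n)) :
    (x + 2 ^ (n - 1)).val.testBit (n - 1) = !x.val.testBit (n - 1) := by
  obtain ⟨m, rfl⟩ := Nat.exists_eq_succ_of_ne_zero hn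
  have hval : ((2 ^ m : ℕ) : ZMod (2 ^ (m + 1))).val = 2 ^ m := by
    rw [ZMod.val_natCast, Nat.mod_eq_of_lt (Nat.pow_lt_pow_right (by norm_num) m.lt_succ_self)]
  push_cast at hval
  simp only [Nat.succ_sub_one, ZMod.val_add, hval, Nat.testBit_mod_two_pow, m.lt_succ_self,
    decide_true, Bool.true_and, add_comm x.val, Nat.testBit_two_pow_add_eq]

theorem change_at_every_gap_general (n : ℕ) :
    ∃ H : (Fin n → Bool × Bool × Bool) → (Fin n → Bool × Bool × Bool),
      ∀ (c : Fin n → Bool × Bool × Bool) (k : ℕ), 1 ≤ k → k < 2 ^ n →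
        ∀ v : Fin n, ∃ t : ℕ, 1 ≤ t ∧ H^[k * t] c v ≠ c v := by
  set H := counterNetwork (counterState n)
  refine ⟨H, fun c k hk hkn v => ?_⟩
  have hn : n - 1 + 1 = n := Nat.sub_add_cancel v.pos
  obtain ⟨t, ht0, ht⟩ := Nat.exists_mul_modEq_two_pow_pred hk hkn
  have hkt : ((k * t : ℕ) : ZMod (2 ^ n)) = 2 ^ (n - 1) := by
    exact_mod_cast (ZMod.natCast_eq_natCast_iff _ _ _).2 ht
  set x := invFun (counterState n) c
  have hhalf : H^[k * t] c = counterState n (x + 2 ^ (n - 1)) := by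
    rw [counterNetwork_iterate (counterState_injective n) c (by positivity), hkt]
  have hfull : H^[k * (2 * t)] c = counterState n x := by
    rw [counterNetwork_iterate (counterState_injective n) c (by positivity), Nat.mul_left_comm,
      Nat.cast_mul, hkt, Nat.cast_two, ← pow_succ', hn,
      show (2 ^ n : ZMod (2 ^ n)) = 0 by exact_mod_cast ZMod.natCast_self (2 ^ n), add_zero]
  have hne : H^[k * t] c v ≠ H^[k * (2 * t)] c v := by
    rw [hhalf, hfull]
    simp [counterState, ZMod.testBit_val_add_two_pow_pred v.pos.ne']
  by_cases h : H^[k * t] c v = c v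
  · exact ⟨2 * t, by omega, fun h' => hne (h.trans h'.symm)⟩
  · exact ⟨t, by omega, h⟩

/-- For every `n ≥ 1` there is an automata network `H` on `n` nodes over the
alphabet `Q = {0,1} × {0,1} × {0,1}` such that for every configuration `c`, every
`k` with `1 ≤ k < 2^n` and every node `v`, some iterate of `H` at a multiple `k·t`
(`t ≥ 1`) of `k` changes the state of `v`. -/
theorem change_at_every_gap (n : ℕ) (hn : 1 ≤ n) :
    ∃ H : (Fin n → Bool × Bool × Bool) → (Fin n → Bool × Bool × Bool),
      ∀ (c : Fin n → Bool × Bool × Bool) (k : ℕ), 1 ≤ k → k < 2 ^ n →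
        ∀ v : Fin n, ∃ t : ℕ, 1 ≤ t ∧ H^[k * t] c v ≠ c v :=
  change_at_every_gap_general n
end

section
/- Fix integers α ≥ 1, c ≥ 1, k ≥ 1. Then there exists N such that for every n ≥ N the following configuration of objects does NOT exist: a finite alphabet Q; a finite simple graph H on a vertex set W with |W| ≤ α·n satisfying the ball-growth bound that for every X ⊆ W with |X| ≤ α and every integer t ≥ 1, the set of vertices of H at graph distance at most t from X has at most c·t^k elements; an automata network G : (W → Q) → (W → Q) such that for every w ∈ W, G(x)_w is determined by the restriction of x to the closed neighbourhood of w in H; and a block embedding φ from ({1,…,n} → Bool) into (W → Q) with time constant T, 1 ≤ T ≤ α, such that φ ∘ F0 = G^T ∘ φ, where F0 is the disjunctive network with self-loops on the complete binary tree with n nodes: F0(x)_v = x_v ∨ x_{⌊v/2⌋} ∨ x_{2v} ∨ x_{2v+1} for v ∈ {1,…,n}, where a disjunct is omitted when its index lies outside {1,…,n} (and x_{⌊v/2⌋} is omitted when v = 1). -/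
/-- Value of a configuration on `{1,…,n}` (coded as `Fin n`, node `v` standing for
`v+1`) at position `m ∈ ℕ`, defaulting to `false` when `m ∉ {1,…,n}` (so disjuncts
at out-of-range indices are omitted). -/
def getNode (n : ℕ) (x : Fin n → Bool) (m : ℕ) : Bool :=
  if h : 1 ≤ m ∧ m ≤ n then x ⟨m - 1, by omega⟩ else false

/-- The disjunctive network with self-loops on the complete binary tree with `n`
nodes `{1,…,n}`: `F0(x)_v = x_v ∨ x_{⌊v/2⌋} ∨ x_{2v} ∨ x_{2v+1}`, disjuncts at
indices outside `{1,…,n}` being omitted (in particular the parent disjunct is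
omitted when `v = 1`). -/
def treeNet (n : ℕ) : (Fin n → Bool) → Fin n → Bool := fun x v =>
  x v || getNode n x (((v : ℕ) + 1) / 2) || getNode n x (2 * ((v : ℕ) + 1)) ||
    getNode n x (2 * ((v : ℕ) + 1) + 1)

/-! A change at a single node of the binary tree reaches the root within `t = ⌊log₂ n⌋ + 1`
steps of the tree network. In a local simulation with time constant `T`, information travels at
most `T t` edges in that time, so every block meets the ball of radius `T t` around a vertex of the
root block that tells its two patterns apart. That ball therefore has at least `n` vertices, while
polynomial ball growth bounds it by `c (α t)^k`, which is `o(n)`. -/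

open Filter Asymptotics in
theorem eventually_mul_succ_pow_lt_two_pow (C k : ℕ) :
    ∀ᶠ L : ℕ in atTop, C * (L + 1) ^ k < 2 ^ L := by
  have h : (fun L : ℕ => ((L + 1 : ℕ) : ℝ) ^ k) =o[atTop] fun L => (2 : ℝ) ^ (L + 1) :=
    (isLittleO_pow_const_const_pow_of_one_lt k one_lt_two).comp_tendsto
      (tendsto_add_atTop_nat 1)
  have hC : (fun L : ℕ => (C : ℝ) * ((L + 1 : ℕ) : ℝ) ^ k) =o[atTop] fun L => (2 : ℝ) ^ L := by
    refine (h.const_mul_left _).trans_isBigO ?_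
    simp only [pow_succ']
    exact (isBigO_refl _ _).const_mul_left 2
  filter_upwards [hC.tendsto_div_nhds_zero.eventually (gt_mem_nhds one_pos)] with L hL
  rw [div_lt_one (by positivity)] at hL
  exact_mod_cast hL

open Filter in
theorem eventually_mul_log_two_succ_pow_lt (C k : ℕ) :
    ∀ᶠ n : ℕ in atTop, C * (Nat.log 2 n + 1) ^ k < n := by
  have hlog : Tendsto (Nat.log 2) atTop atTop :=
    tendsto_atTop_atTop.2 fun M => ⟨2 ^ M, fun n hn => Nat.le_log_of_pow_le one_lt_two hn⟩
  filter_upwards [hlog.eventually (eventually_mul_succ_pow_lt_two_pow C k),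
    eventually_ne_atTop 0] with n hn hn0
  exact hn.trans_le (Nat.pow_log_le_self 2 hn0)

namespace SimpleGraph

variable {W Q : Type*}

def IsLocalMap (H : SimpleGraph W) (G : (W → Q) → (W → Q)) : Prop :=
  ∀ (x y : W → Q) (w : W), (∀ u, (u = w ∨ H.Adj u w) → x u = y u) → G x w = G y w

theorem IsLocalMap.iterate_apply_eq {H : SimpleGraph W} {G : (W → Q) → (W → Q)}
    (hG : H.IsLocalMap G) (r : ℕ) {x y : W → Q} {w : W}
    (h : ∀ u, (∃ p : H.Walk u w, p.length ≤ r) → x u = y u) : G^[r] x w = G^[r] y w := by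
  induction r generalizing w with
  | zero => exact h w ⟨.nil, le_rfl⟩
  | succ r ih =>
    rw [Function.iterate_succ_apply', Function.iterate_succ_apply']
    refine hG _ _ w fun u hu => ih fun u' ⟨p, hp⟩ => ?_
    rcases hu with rfl | hadj
    · exact h u' ⟨p, by omega⟩
    · exact h u' ⟨p.concat hadj, by rw [Walk.length_concat]; omega⟩

end SimpleGraph

namespace BlockEmbedding

variable {QF QG VF VG : Type*} (B : BlockEmbedding QF QG VF VG)

theorem toFun_apply_of_blk_eq (x : VF → QF) {w : VG} {i : VF} (hw : B.blk w = i) :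
    B.toFun x w = B.pat i (x i) w := by
  subst hw; rfl

theorem exists_pat_ne (i : VF) {q q' : QF} (h : q ≠ q') :
    ∃ w, B.blk w = i ∧ B.pat i q w ≠ B.pat i q' w := by
  by_contra! hcon
  exact h (B.pat_inj i q q' hcon)

theorem toFun_iterate {F : (VF → QF) → (VF → QF)} {G : (VG → QG) → (VG → QG)} {T : ℕ}
    (hsim : ∀ x, B.toFun (F x) = G^[T] (B.toFun x)) (s : ℕ) (x : VF → QF) :
    B.toFun (F^[s] x) = G^[T * s] (B.toFun x) := by
  rw [Function.iterate_mul]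
  exact Function.Semiconj.iterate_right hsim s x

theorem exists_walk_to_blk_of_iterate_ne {H : SimpleGraph VG} {F : (VF → QF) → (VF → QF)}
    {G : (VG → QG) → (VG → QG)} {T : ℕ} (hsim : ∀ x, B.toFun (F x) = G^[T] (B.toFun x))
    (hG : H.IsLocalMap G) {x y : VF → QF} {v : VF} (hxy : ∀ i, i ≠ v → x i = y i)
    {s : ℕ} {w₀ : VG} (hne : B.toFun (F^[s] x) w₀ ≠ B.toFun (F^[s] y) w₀) :
    ∃ u, B.blk u = v ∧ ∃ p : H.Walk w₀ u, p.length ≤ T * s := by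
  rw [B.toFun_iterate hsim, B.toFun_iterate hsim] at hne
  by_contra! hfar
  refine hne (hG.iterate_apply_eq _ fun u ⟨p, hp⟩ => ?_)
  have hu : B.blk u ≠ v := fun hu => (hfar u hu p.reverse).not_ge (by simpa using hp)
  simp only [toFun, hxy _ hu]

end BlockEmbedding

namespace treeNet

theorem getNode_of_le {n : ℕ} (x : Fin n → Bool) {m : ℕ} (h1 : 1 ≤ m) (h2 : m ≤ n) :
    getNode n x m = x ⟨m - 1, by omega⟩ := by
  simp [getNode, h1, h2]

theorem getNode_treeNet {n : ℕ} (x : Fin n → Bool) {m : ℕ} (h1 : 1 ≤ m) (h2 : m ≤ n) :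
    getNode n (treeNet n x) m =
      (getNode n x m || getNode n x (m / 2) || getNode n x (2 * m) ||
        getNode n x (2 * m + 1)) := by
  rw [getNode_of_le _ h1 h2, getNode_of_le _ h1 h2, treeNet]
  simp only [Nat.sub_add_cancel h1]

theorem iterate_false (n s : ℕ) : (treeNet n)^[s] (fun _ => false) = fun _ => false :=
  Function.iterate_fixed (funext fun _ => by simp [treeNet, getNode]) s

theorem getNode_one_iterate (n s : ℕ) {x : Fin n → Bool} {m : ℕ} (h1 : 1 ≤ m) (h2 : m ≤ n)
    (hs : m ≤ 2 ^ s) (hx : getNode n x m = true) : getNode n ((treeNet n)^[s] x) 1 = true := by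
  induction s generalizing x m with
  | zero =>
    obtain rfl : m = 1 := by omega
    exact hx
  | succ s ih =>
    rw [Function.iterate_succ_apply]
    obtain rfl | hm := eq_or_lt_of_le h1
    · refine ih le_rfl h2 Nat.one_le_two_pow ?_
      simp [getNode_treeNet x le_rfl h2, hx]
    · refine ih (m := m / 2) (by omega) (by omega) (by rw [pow_succ] at hs; omega) ?_
      rw [getNode_treeNet x (by omega) (by omega)]
      rcases Nat.even_or_odd' m with ⟨j, rfl | rfl⟩ <;> simp_all [Nat.mul_add_div]

theorem iterate_apply_root {n s : ℕ} {x : Fin n → Bool} {v : Fin n} (hv : x v = true)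
    (hs : (v : ℕ) + 1 ≤ 2 ^ s) : (treeNet n)^[s] x ⟨0, v.pos⟩ = true := by
  have hx : getNode n x (v + 1) = true := by
    rwa [getNode_of_le x (by omega) v.isLt]
  simpa [getNode_of_le _ le_rfl v.pos] using getNode_one_iterate n s (by omega) v.isLt hs hx

end treeNet

theorem no_simulation_of_tree_with_polynomial_ball_growth_general
    (α c k : ℕ) :
    ∃ N : ℕ, ∀ n : ℕ, N ≤ n →
      ¬ ∃ (Q : Type) (_ : Finite Q) (W : Type) (_ : Finite W)
          (H : SimpleGraph W) (G : (W → Q) → (W → Q))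
          (B : BlockEmbedding Bool Q (Fin n) W) (T : ℕ),
          Nat.card W ≤ α * n ∧
          (∀ X : Set W, Nat.card X ≤ α → ∀ t : ℕ, 1 ≤ t →
            Nat.card {w : W | ∃ u ∈ X, ∃ p : H.Walk u w, p.length ≤ t} ≤ c * t ^ k) ∧
          (∀ (x y : W → Q) (w : W),
            (∀ u, (u = w ∨ H.Adj u w) → x u = y u) → G x w = G y w) ∧
          1 ≤ T ∧ T ≤ α ∧
          (∀ x : Fin n → Bool, B.toFun (treeNet n x) = G^[T] (B.toFun x)) := by
  obtain ⟨N, hN⟩ := Filter.eventually_atTop.1 (eventually_mul_log_two_succ_pow_lt (c * α ^ k) k)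
  refine ⟨N, fun n hn => ?_⟩
  rintro ⟨Q, _, W, _, H, G, B, T, -, hball, hloc, hT1, hTα, hsim⟩
  set t := Nat.log 2 n + 1
  have hlt : c * α ^ k * t ^ k < n := hN n hn
  have hn : 0 < n := by omega
  obtain ⟨w₀, hw₀, hne⟩ := B.exists_pat_ne ⟨0, hn⟩ (by decide : true ≠ false)
  have hcover (v : Fin n) : ∃ u, B.blk u = v ∧ ∃ p : H.Walk w₀ u, p.length ≤ T * t := by
    refine B.exists_walk_to_blk_of_iterate_ne (x := fun i => decide (i = v))
      (y := fun _ => false) hsim hloc (fun i hi => by simp [hi]) ?_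
    rw [B.toFun_apply_of_blk_eq _ hw₀, B.toFun_apply_of_blk_eq _ hw₀, treeNet.iterate_false,
      treeNet.iterate_apply_root (by simp) ((Nat.lt_pow_succ_log_self one_lt_two n).trans' v.isLt)]
    exact hne
  set ball := {w : W | ∃ u ∈ ({w₀} : Set W), ∃ p : H.Walk u w, p.length ≤ T * t}
  have hn_le : n ≤ Nat.card ball := by
    simpa using Nat.card_le_card_of_surjective (fun u : ball => B.blk u) fun v =>
      let ⟨u, hu, hp⟩ := hcover v; ⟨⟨u, w₀, rfl, hp⟩, hu⟩
  have hball_le : Nat.card ball ≤ c * (T * t) ^ k :=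
    hball {w₀} (by simpa using hT1.trans hTα) (T * t) (Nat.mul_pos hT1 (by omega))
  have hpow_le : c * (T * t) ^ k ≤ c * α ^ k * t ^ k := by
    rw [mul_pow, ← mul_assoc]
    gcongr
  omega

/-- **Polynomial ball growth forbids constant-rescaling simulation of binary trees**
(core of the theorem that no family of polynomial ball growth is strongly universal).
Fix `α, c, k ≥ 1`.  For all large enough `n`, there is no finite alphabet `Q`, finite
simple graph `H` on a vertex set `W` with `|W| ≤ α·n` whose balls satisfy
`|B(X,t)| ≤ c·t^k` whenever `|X| ≤ α` and `t ≥ 1` (the ball being the set of vertices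
reachable from `X` by a walk of length ≤ t), automata network `G` on `W` local with
respect to `H`, and block embedding `φ` of `(Fin n → Bool)` into `(W → Q)` with
time constant `T`, `1 ≤ T ≤ α`, such that `φ ∘ F0 = G^T ∘ φ`, where `F0` is the
disjunctive network with self-loops on the complete binary tree with `n` nodes. -/
theorem no_simulation_of_tree_with_polynomial_ball_growth
    (α c k : ℕ) (hα : 1 ≤ α) (hc : 1 ≤ c) (hk : 1 ≤ k) :
    ∃ N : ℕ, ∀ n : ℕ, N ≤ n →
      ¬ ∃ (Q : Type) (_ : Finite Q) (W : Type) (_ : Finite W)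
          (H : SimpleGraph W) (G : (W → Q) → (W → Q))
          (B : BlockEmbedding Bool Q (Fin n) W) (T : ℕ),
          Nat.card W ≤ α * n ∧
          (∀ X : Set W, Nat.card X ≤ α → ∀ t : ℕ, 1 ≤ t →
            Nat.card {w : W | ∃ u ∈ X, ∃ p : H.Walk u w, p.length ≤ t} ≤ c * t ^ k) ∧
          (∀ (x y : W → Q) (w : W),
            (∀ u, (u = w ∨ H.Adj u w) → x u = y u) → G x w = G y w) ∧
          1 ≤ T ∧ T ≤ α ∧
          (∀ x : Fin n → Bool, B.toFun (treeNet n x) = G^[T] (B.toFun x)) :=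
  no_simulation_of_tree_with_polynomial_ball_growth_general α c k
end

section
/- Let (G1, λ1, ρ1) and (G2, λ2, ρ2) be two CSANs over the same finite alphabet Q on disjoint finite vertex sets V1 and V2, with global maps F1 and F2. Let C = C1 ⊔ C2 be a finite set disjoint from V1 ∪ V2 and φ1 : C → V1, φ2 : C → V2 injective maps. Assume: (a) the labeled graphs induced on φ1(C) in G1 and on φ2(C) in G2 coincide under the identification φ1(v) ↔ φ2(v) (the same pairs are adjacent, corresponding vertices carry equal vertex labels, and corresponding edges carry equal edge labels); (b) every G1-neighbour of a vertex of φ1(C2) lies in φ1(C); (c) every G2-neighbour of a vertex of φ2(C1) lies in φ2(C). Then the glueing F' of F1 and F2 over C is itself the global map of a CSAN (G', λ', ρ') on V' = C ∪ (V1 ∖ φ1(C)) ∪ (V2 ∖ φ2(C)), where the edges of G' are: the edges induced on C via the common identification; the edges of G_i induced on V_i ∖ φ_i(C) (i = 1,2); and an edge {u, w} for each u ∈ C_i and w ∈ V_i ∖ φ_i(C) such that {φ_i(u), w} is an edge of G_i; with vertex label λ'(v) = λ_i(α(v)) (α being the identification of V' with vertices of G1 or G2) and edge labels inherited correspondingly.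 In particular, every vertex of G' has the same vertex label and the same collection of incident edge labels as some vertex of G1 or of G2. -/
/-!
Side `i` of the glueing sees the part `Dᵢ = C ∪ (Vᵢ ∖ φᵢ(C))` of `V'`, and the map that is `φᵢ`
on `C` and the identity elsewhere is a bijection `Dᵢ → Vᵢ`. Transport `Gᵢ` to `Dᵢ` along it and
let `G'` be the union of the two copies. By (c) and (a), a vertex of `C₁ ∪ (V₁ ∖ φ₁(C))` gets no
edge from the copy of `G₂` that the copy of `G₁` lacks (symmetrically by (b) on side `2`), so its
neighbourhood in `G'` is carried bijectively, with its labels, onto that of its image in `G₁`;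
hence the local rule of `G'` there is that of `G₁`, applied to the transported state `ρ₁(x)`.
-/

/-- Global map of a CSAN given, over an ambient finite vertex type `U`, by a Boolean
adjacency `A`, vertex labels `lab : U → (Q × Multiset Q → Q)` and edge labels
`edge : U → U → (Q → Q)`:
`F(x)_v = λ_v (x_v, multiset of ρ_{{u,v}}(x_u) over the neighbours u of v)`. -/
def csanMap {U Q : Type*} [Fintype U] (A : U → U → Bool)
    (lab : U → Q × Multiset Q → Q) (edge : U → U → Q → Q) :
    (U → Q) → U → Q :=
  fun x v =>
    lab v (x v,
      (Finset.univ.filter fun u => A u v = true).val.map fun u => edge u v (x u))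

/-- The multiset of labels of the edges incident to `v`. -/
def incidentLabels {U Q : Type*} [Fintype U] (A : U → U → Bool)
    (edge : U → U → Q → Q) (v : U) : Multiset (Q → Q) :=
  (Finset.univ.filter fun u => A u v = true).val.map fun u => edge u v

open Set

theorem map_filter_univ_val_eq_of_bijOn {α β γ : Type*} [Fintype α] [Fintype β]
    {p : α → Prop} {q : β → Prop} [DecidablePred p] [DecidablePred q] {e : α → β}
    (he : BijOn e {a | p a} {b | q b}) {f : α → γ} {g : β → γ}
    (hfg : ∀ a, p a → f a = g (e a)) :
    (Finset.univ.filter p).val.map f = (Finset.univ.filter q).val.map g := by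
  classical
  have himage : (Finset.univ.filter p).image e = Finset.univ.filter q :=
    Finset.coe_injective (by simpa using he.image_eq)
  rw [← himage, Finset.image_val_of_injOn (by simpa using he.injOn), Multiset.map_map]
  exact Multiset.map_congr rfl fun a ha => hfg a (by simpa using ha)

structure IsLocalIsoAt {U V L E : Type*} (A' : U → U → Bool) (lab' : U → L)
    (edge' : U → U → E) (A : V → V → Bool) (lab : V → L) (edge : V → V → E)
    (β : U → V) (v : U) : Prop where
  bijOn_adj : BijOn β {u | A' u v = true} {w | A w (β v) = true}
  edge_eq : ∀ u, A' u v = true → edge' u v = edge (β u) (β v)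
  lab_eq : lab' v = lab (β v)

namespace IsLocalIsoAt

variable {U V Q : Type*} [Fintype U] [Fintype V] {A' : U → U → Bool}
  {lab' : U → Q × Multiset Q → Q} {edge' : U → U → Q → Q} {A : V → V → Bool}
  {lab : V → Q × Multiset Q → Q} {edge : V → V → Q → Q} {β : U → V} {v : U}

theorem incidentLabels_eq (h : IsLocalIsoAt A' lab' edge' A lab edge β v) :
    incidentLabels A' edge' v = incidentLabels A edge (β v) :=
  map_filter_univ_val_eq_of_bijOn h.bijOn_adj h.edge_eq

theorem csanMap_eq (h : IsLocalIsoAt A' lab' edge' A lab edge β v) {D : Set U}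
    (hv : v ∈ D) (hD : ∀ u, A' u v = true → u ∈ D) {x : U → Q} {y : V → Q}
    (hxy : EqOn (y ∘ β) x D) :
    csanMap A' lab' edge' x v = csanMap A lab edge y (β v) := by
  unfold csanMap
  rw [h.lab_eq, ← hxy hv]
  congr 2
  refine map_filter_univ_val_eq_of_bijOn h.bijOn_adj fun u hu => ?_
  rw [h.edge_eq u hu, ← hxy (hD u hu), Function.comp_apply]

end IsLocalIsoAt

section Side

variable {U : Type*}

open Classical in
noncomputable def toSide (C : Set U) (φ : U → U) (u : U) : U := if u ∈ C then φ u else u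

def sideDomain (C V : Set U) (φ : U → U) : Set U := C ∪ (V \ φ '' C)

def sideAdj (C V : Set U) (A : U → U → Bool) (φ : U → U) (u w : U) : Prop :=
  u ∈ sideDomain C V φ ∧ w ∈ sideDomain C V φ ∧ A (toSide C φ u) (toSide C φ w) = true

variable {C Ci Cj V : Set U} {A : U → U → Bool} {φ : U → U} {u w v : U}

theorem toSide_of_mem (h : u ∈ C) : toSide C φ u = φ u := if_pos h

theorem toSide_of_notMem (h : u ∉ C) : toSide C φ u = u := if_neg h

theorem toSide_of_mem_diff (hCV : Disjoint C V) (h : u ∈ V \ φ '' C) : toSide C φ u = u :=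
  toSide_of_notMem (hCV.notMem_of_mem_right h.1)

theorem bijOn_toSide (hinj : InjOn φ C) (hmaps : MapsTo φ C V) (hCV : Disjoint C V) :
    BijOn (toSide C φ) (sideDomain C V φ) V := by
  refine ⟨?_, ?_, ?_⟩
  · rintro u (hu | hu)
    · rw [toSide_of_mem hu]; exact hmaps hu
    · rw [toSide_of_mem_diff hCV hu]; exact hu.1
  · rintro u (hu | hu) w (hw | hw) h
    · rw [toSide_of_mem hu, toSide_of_mem hw] at h; exact hinj hu hw h
    · rw [toSide_of_mem hu, toSide_of_mem_diff hCV hw] at h; exact absurd ⟨u, hu, h⟩ hw.2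
    · rw [toSide_of_mem_diff hCV hu, toSide_of_mem hw] at h; exact absurd ⟨w, hw, h.symm⟩ hu.2
    · rwa [toSide_of_mem_diff hCV hu, toSide_of_mem_diff hCV hw] at h
  · intro w hw
    by_cases hwC : w ∈ φ '' C
    · obtain ⟨c, hc, rfl⟩ := hwC
      exact ⟨c, Or.inl hc, toSide_of_mem hc⟩
    · exact ⟨w, Or.inr ⟨hw, hwC⟩, toSide_of_mem_diff hCV ⟨hw, hwC⟩⟩

theorem eqOn_toSide {α : U → U} (hCi : Ci ⊆ C) (hCV : Disjoint C V)
    (hαC : ∀ v ∈ Ci, α v = φ v) (hαo : ∀ v, v ∉ C → α v = v) :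
    EqOn α (toSide C φ) (Ci ∪ (V \ φ '' C)) := by
  rintro v (hv | hv)
  · rw [hαC v hv, toSide_of_mem (hCi hv)]
  · rw [hαo v (hCV.notMem_of_mem_right hv.1), toSide_of_mem_diff hCV hv]

theorem eqOn_comp_toSide {Q : Type*} {x y : U → Q} (hCV : Disjoint C V)
    (hC : ∀ c ∈ C, y (φ c) = x c) (ho : ∀ v, v ∉ φ '' C → y v = x v) :
    EqOn (y ∘ toSide C φ) x (sideDomain C V φ) := by
  rintro u (hu | hu)
  · exact (congrArg y (toSide_of_mem hu)).trans (hC u hu)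
  · exact (congrArg y (toSide_of_mem_diff hCV hu)).trans (ho u hu.2)

theorem sideAdj_comm (hA : ∀ u w, A u w = A w u) :
    sideAdj C V A φ u w ↔ sideAdj C V A φ w u := by
  unfold sideAdj
  rw [hA]
  tauto

theorem bijOn_setOf_sideAdj (hbij : BijOn (toSide C φ) (sideDomain C V φ) V)
    (hA : ∀ u w, A u w = true → u ∈ V) (hv : v ∈ sideDomain C V φ) :
    BijOn (toSide C φ) {u | sideAdj C V A φ u v} {w | A w (toSide C φ v) = true} := by
  convert hbij.subset_right (r := {w | A w (toSide C φ v) = true}) fun w hw => hA _ _ hw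
    using 1
  ext u
  simp [sideAdj, hv]

theorem sideAdj_iff (hC : C ⊆ Ci ∪ Cj) (hCi : Ci ⊆ C) (hCV : Disjoint C V)
    (hA : ∀ u w, A u w = A w u) (hcross : ∀ c ∈ Cj, ∀ w, A w (φ c) = true → w ∈ φ '' C) :
    sideAdj C V A φ u w ↔
      (u ∈ C ∧ w ∈ C ∧ A (φ u) (φ w) = true) ∨
      (u ∈ V \ φ '' C ∧ w ∈ V \ φ '' C ∧ A u w = true) ∨
      (u ∈ Ci ∧ w ∈ V \ φ '' C ∧ A (φ u) w = true) ∨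
      (w ∈ Ci ∧ u ∈ V \ φ '' C ∧ A (φ w) u = true) := by
  have hown : ∀ {c w}, c ∈ C → w ∈ V \ φ '' C → A (φ c) w = true → c ∈ Ci :=
    fun hc hw h => (hC hc).resolve_right fun hcj => hw.2 (hcross _ hcj _ (by rwa [hA]))
  constructor
  · rintro ⟨hu | hu, hw | hw, h⟩
    · rw [toSide_of_mem hu, toSide_of_mem hw] at h
      exact Or.inl ⟨hu, hw, h⟩
    · rw [toSide_of_mem hu, toSide_of_mem_diff hCV hw] at h
      exact Or.inr (Or.inr (Or.inl ⟨hown hu hw h, hw, h⟩))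
    · rw [toSide_of_mem_diff hCV hu, toSide_of_mem hw, hA] at h
      exact Or.inr (Or.inr (Or.inr ⟨hown hw hu h, hu, h⟩))
    · rw [toSide_of_mem_diff hCV hu, toSide_of_mem_diff hCV hw] at h
      exact Or.inr (Or.inl ⟨hu, hw, h⟩)
  · rintro (⟨hu, hw, h⟩ | ⟨hu, hw, h⟩ | ⟨hu, hw, h⟩ | ⟨hw, hu, h⟩)
    · exact ⟨Or.inl hu, Or.inl hw, by rwa [toSide_of_mem hu, toSide_of_mem hw]⟩
    · exact ⟨Or.inr hu, Or.inr hw, by rwa [toSide_of_mem_diff hCV hu, toSide_of_mem_diff hCV hw]⟩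
    · exact ⟨Or.inl (hCi hu), Or.inr hw,
        by rwa [toSide_of_mem (hCi hu), toSide_of_mem_diff hCV hw]⟩
    · exact ⟨Or.inr hu, Or.inl (hCi hw),
        by rwa [toSide_of_mem_diff hCV hu, toSide_of_mem (hCi hw), hA]⟩

end Side

section TwoSides

variable {U : Type*} {C Ci Vi Vj : Set U} {Ai Aj : U → U → Bool} {φi φj : U → U} {u v : U}

theorem mem_of_mem_sideDomain (hV : Disjoint Vi Vj) (hi : v ∈ sideDomain C Vi φi)
    (hj : v ∈ sideDomain C Vj φj) : v ∈ C := by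
  rcases hi with hi | hi
  · exact hi
  rcases hj with hj | hj
  · exact hj
  exact absurd hj.1 (hV.notMem_of_mem_left hi.1)

/-- By the cross condition, an edge of the transported `Gⱼ` at a vertex of side `i` joins two
vertices of `C`, where the copies of `Gᵢ` and `Gⱼ` agree. -/
theorem sideAdj_of_sideAdj_of_mem (hCi : Ci ⊆ C) (hCV : Disjoint C Vi) (hV : Disjoint Vi Vj)
    (hcross : ∀ c ∈ Ci, ∀ w, Aj w (φj c) = true → w ∈ φj '' C)
    (hadj : ∀ u ∈ C, ∀ w ∈ C, Aj (φj u) (φj w) = Ai (φi u) (φi w))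
    (hv : v ∈ Ci ∪ (Vi \ φi '' C)) (h : sideAdj C Vj Aj φj u v) : sideAdj C Vi Ai φi u v := by
  obtain ⟨hu, hvj, h⟩ := h
  have hvCi : v ∈ Ci := hv.resolve_right fun hvi =>
    hCV.notMem_of_mem_right hvi.1 (mem_of_mem_sideDomain hV (Or.inr hvi) hvj)
  have hvC := hCi hvCi
  rw [toSide_of_mem hvC] at h
  have huC : u ∈ C := by
    by_contra huC
    rw [toSide_of_notMem huC] at h
    exact (hu.resolve_left huC).2 (hcross v hvCi u h)
  rw [toSide_of_mem huC, hadj u huC v hvC] at h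
  exact ⟨Or.inl huC, Or.inl hvC, by rwa [toSide_of_mem huC, toSide_of_mem hvC]⟩

theorem glued_vertex_of_side {Q : Type*} [Fintype U] {A' : U → U → Bool}
    {lab' : U → Q × Multiset Q → Q} {edge' : U → U → Q → Q} {lab : U → Q × Multiset Q → Q}
    {edge : U → U → Q → Q} {α : U → U} {ρ : (U → Q) → U → Q}
    (hbij : BijOn (toSide C φi) (sideDomain C Vi φi) Vi) (hA : ∀ u w, Ai u w = true → u ∈ Vi)
    (hv : v ∈ sideDomain C Vi φi) (hα : α v = toSide C φi v)
    (hadj : ∀ u, A' u v = true ↔ sideAdj C Vi Ai φi u v)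
    (hedge : ∀ u w, sideAdj C Vi Ai φi u w →
      edge' u w = edge (toSide C φi u) (toSide C φi w))
    (hlab : lab' v = lab (toSide C φi v))
    (hρ : ∀ x, EqOn (ρ x ∘ toSide C φi) x (sideDomain C Vi φi)) :
    α v ∈ Vi ∧ lab' v = lab (α v) ∧
      incidentLabels A' edge' v = incidentLabels Ai edge (α v) ∧
      ∀ x, csanMap A' lab' edge' x v = csanMap Ai lab edge (ρ x) (α v) := by
  have hiso : IsLocalIsoAt A' lab' edge' Ai lab edge (toSide C φi) v :=
    ⟨by simpa only [hadj] using bijOn_setOf_sideAdj hbij hA hv,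
      fun u hu => hedge u v ((hadj u).1 hu), hlab⟩
  rw [hα]
  exact ⟨hbij.mapsTo hv, hiso.lab_eq, hiso.incidentLabels_eq,
    fun x => hiso.csanMap_eq hv (fun u hu => ((hadj u).1 hu).1) (hρ x)⟩

end TwoSides

section Glue

variable {U : Type*} {C C1 C2 V1 V2 : Set U} {A1 A2 : U → U → Bool} {φ1 φ2 : U → U}

/- On `C` the two transported copies agree by (a), so `glueLab` and `glueEdge` may take the
labels of side `1` there. -/

open Classical in
noncomputable def glueAdj (C V1 V2 : Set U) (A1 A2 : U → U → Bool) (φ1 φ2 : U → U)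
    (u w : U) : Bool :=
  decide (sideAdj C V1 A1 φ1 u w ∨ sideAdj C V2 A2 φ2 u w)

open Classical in
noncomputable def glueLab {L : Type*} (C V1 : Set U) (φ1 φ2 : U → U) (lab1 lab2 : U → L)
    (v : U) : L :=
  if v ∈ sideDomain C V1 φ1 then lab1 (toSide C φ1 v) else lab2 (toSide C φ2 v)

open Classical in
noncomputable def glueEdge {E : Type*} (C V1 : Set U) (φ1 φ2 : U → U)
    (edge1 edge2 : U → U → E) (u w : U) : E :=
  if u ∈ sideDomain C V1 φ1 ∧ w ∈ sideDomain C V1 φ1 then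
    edge1 (toSide C φ1 u) (toSide C φ1 w)
  else edge2 (toSide C φ2 u) (toSide C φ2 w)

theorem glueAdj_eq_true {u w : U} :
    glueAdj C V1 V2 A1 A2 φ1 φ2 u w = true ↔ sideAdj C V1 A1 φ1 u w ∨ sideAdj C V2 A2 φ2 u w :=
  by simp [glueAdj]

theorem glueAdj_comm (hA1 : ∀ u w, A1 u w = A1 w u) (hA2 : ∀ u w, A2 u w = A2 w u)
    (u w : U) : glueAdj C V1 V2 A1 A2 φ1 φ2 u w = glueAdj C V1 V2 A1 A2 φ1 φ2 w u := by
  rw [Bool.eq_iff_iff, glueAdj_eq_true, glueAdj_eq_true, sideAdj_comm hA1, sideAdj_comm hA2]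

theorem glueAdj_eq_true_iff (hC : C = C1 ∪ C2) (hCV1 : Disjoint C V1) (hCV2 : Disjoint C V2)
    (hA1 : ∀ u w, A1 u w = A1 w u) (hA2 : ∀ u w, A2 u w = A2 w u)
    (hb : ∀ c ∈ C2, ∀ w, A1 w (φ1 c) = true → w ∈ φ1 '' C)
    (hc : ∀ c ∈ C1, ∀ w, A2 w (φ2 c) = true → w ∈ φ2 '' C)
    (hadj : ∀ u ∈ C, ∀ w ∈ C, A1 (φ1 u) (φ1 w) = A2 (φ2 u) (φ2 w)) (u w : U) :
    glueAdj C V1 V2 A1 A2 φ1 φ2 u w = true ↔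
      ((u ∈ C ∧ w ∈ C ∧ A1 (φ1 u) (φ1 w) = true) ∨
       (u ∈ V1 \ φ1 '' C ∧ w ∈ V1 \ φ1 '' C ∧ A1 u w = true) ∨
       (u ∈ V2 \ φ2 '' C ∧ w ∈ V2 \ φ2 '' C ∧ A2 u w = true) ∨
       (u ∈ C1 ∧ w ∈ V1 \ φ1 '' C ∧ A1 (φ1 u) w = true) ∨
       (w ∈ C1 ∧ u ∈ V1 \ φ1 '' C ∧ A1 (φ1 w) u = true) ∨
       (u ∈ C2 ∧ w ∈ V2 \ φ2 '' C ∧ A2 (φ2 u) w = true) ∨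
       (w ∈ C2 ∧ u ∈ V2 \ φ2 '' C ∧ A2 (φ2 w) u = true)) := by
  have hC2 : (u ∈ C ∧ w ∈ C ∧ A2 (φ2 u) (φ2 w) = true) ↔
      (u ∈ C ∧ w ∈ C ∧ A1 (φ1 u) (φ1 w) = true) :=
    ⟨fun ⟨hu, hw, h⟩ => ⟨hu, hw, (hadj u hu w hw).trans h⟩,
      fun ⟨hu, hw, h⟩ => ⟨hu, hw, (hadj u hu w hw).symm.trans h⟩⟩
  rw [glueAdj_eq_true,
    sideAdj_iff hC.subset (hC ▸ subset_union_left) hCV1 hA1 hb,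
    sideAdj_iff (hC.trans (union_comm C1 C2)).subset (hC ▸ subset_union_right) hCV2 hA2 hc,
    hC2]
  constructor
  · rintro ((h | h | h | h) | (h | h | h | h)) <;> simp only [h, and_self, true_or, or_true]
  · rintro (h | h | h | h | h | h | h) <;> simp only [h, and_self, true_or, or_true]

theorem glueAdj_eq_true_iff_left (hC1 : C1 ⊆ C) (hCV1 : Disjoint C V1) (hV12 : Disjoint V1 V2)
    (hc : ∀ c ∈ C1, ∀ w, A2 w (φ2 c) = true → w ∈ φ2 '' C)
    (hadj : ∀ u ∈ C, ∀ w ∈ C, A1 (φ1 u) (φ1 w) = A2 (φ2 u) (φ2 w))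
    {v : U} (hv : v ∈ C1 ∪ (V1 \ φ1 '' C)) (u : U) :
    glueAdj C V1 V2 A1 A2 φ1 φ2 u v = true ↔ sideAdj C V1 A1 φ1 u v := by
  rw [glueAdj_eq_true, or_iff_left_of_imp]
  exact sideAdj_of_sideAdj_of_mem hC1 hCV1 hV12 hc (fun u hu w hw => (hadj u hu w hw).symm) hv

theorem glueAdj_eq_true_iff_right (hC2 : C2 ⊆ C) (hCV2 : Disjoint C V2) (hV12 : Disjoint V1 V2)
    (hb : ∀ c ∈ C2, ∀ w, A1 w (φ1 c) = true → w ∈ φ1 '' C)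
    (hadj : ∀ u ∈ C, ∀ w ∈ C, A1 (φ1 u) (φ1 w) = A2 (φ2 u) (φ2 w))
    {v : U} (hv : v ∈ C2 ∪ (V2 \ φ2 '' C)) (u : U) :
    glueAdj C V1 V2 A1 A2 φ1 φ2 u v = true ↔ sideAdj C V2 A2 φ2 u v := by
  rw [glueAdj_eq_true, or_iff_right_of_imp]
  exact sideAdj_of_sideAdj_of_mem hC2 hCV2 hV12.symm hb hadj hv

theorem glueLab_of_mem_left {L : Type*} {lab1 lab2 : U → L} {v : U}
    (hv : v ∈ sideDomain C V1 φ1) :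
    glueLab C V1 φ1 φ2 lab1 lab2 v = lab1 (toSide C φ1 v) :=
  if_pos hv

theorem glueLab_of_mem_right {L : Type*} {lab1 lab2 : U → L} {v : U} (hV12 : Disjoint V1 V2)
    (hlab : ∀ c ∈ C, lab1 (φ1 c) = lab2 (φ2 c)) (hv : v ∈ sideDomain C V2 φ2) :
    glueLab C V1 φ1 φ2 lab1 lab2 v = lab2 (toSide C φ2 v) := by
  unfold glueLab
  split_ifs with hv1
  · have hvC := mem_of_mem_sideDomain hV12 hv1 hv
    rw [toSide_of_mem hvC, toSide_of_mem hvC, hlab v hvC]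
  · rfl

variable {E : Type*} {edge1 edge2 : U → U → E} {u w : U}

theorem glueEdge_of_mem_left (hu : u ∈ sideDomain C V1 φ1) (hw : w ∈ sideDomain C V1 φ1) :
    glueEdge C V1 φ1 φ2 edge1 edge2 u w = edge1 (toSide C φ1 u) (toSide C φ1 w) :=
  if_pos ⟨hu, hw⟩

theorem glueEdge_of_notMem_left (h : w ∉ sideDomain C V1 φ1) :
    glueEdge C V1 φ1 φ2 edge1 edge2 u w = edge2 (toSide C φ2 u) (toSide C φ2 w) :=
  if_neg fun h' => h h'.2

theorem glueEdge_of_sideAdj_right (hV12 : Disjoint V1 V2)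
    (hadj : ∀ u ∈ C, ∀ w ∈ C, A1 (φ1 u) (φ1 w) = A2 (φ2 u) (φ2 w))
    (hedge : ∀ u ∈ C, ∀ w ∈ C,
      A1 (φ1 u) (φ1 w) = true → edge1 (φ1 u) (φ1 w) = edge2 (φ2 u) (φ2 w))
    (h : sideAdj C V2 A2 φ2 u w) :
    glueEdge C V1 φ1 φ2 edge1 edge2 u w = edge2 (toSide C φ2 u) (toSide C φ2 w) := by
  obtain ⟨hu2, hw2, h⟩ := h
  by_cases h1 : u ∈ sideDomain C V1 φ1 ∧ w ∈ sideDomain C V1 φ1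
  · have huC := mem_of_mem_sideDomain hV12 h1.1 hu2
    have hwC := mem_of_mem_sideDomain hV12 h1.2 hw2
    rw [glueEdge_of_mem_left h1.1 h1.2]
    simp only [toSide_of_mem huC, toSide_of_mem hwC] at h ⊢
    exact hedge u huC w hwC ((hadj u huC w hwC).trans h)
  · exact if_neg h1

theorem glueEdge_comm (he1 : ∀ u w, edge1 u w = edge1 w u) (he2 : ∀ u w, edge2 u w = edge2 w u) :
    glueEdge C V1 φ1 φ2 edge1 edge2 u w = glueEdge C V1 φ1 φ2 edge1 edge2 w u := by
  unfold glueEdge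
  by_cases h : u ∈ sideDomain C V1 φ1 ∧ w ∈ sideDomain C V1 φ1
  · rw [if_pos h, if_pos h.symm, he1]
  · rw [if_neg h, if_neg (h ∘ And.symm), he2]

theorem glueEdge_spec (hC : C = C1 ∪ C2) (hCV1 : Disjoint C V1) (hCV2 : Disjoint C V2)
    (hV12 : Disjoint V1 V2) :
    (u ∈ C → w ∈ C → glueEdge C V1 φ1 φ2 edge1 edge2 u w = edge1 (φ1 u) (φ1 w)) ∧
    (u ∈ V1 \ φ1 '' C → w ∈ V1 \ φ1 '' C → glueEdge C V1 φ1 φ2 edge1 edge2 u w = edge1 u w) ∧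
    (u ∈ V2 \ φ2 '' C → w ∈ V2 \ φ2 '' C → glueEdge C V1 φ1 φ2 edge1 edge2 u w = edge2 u w) ∧
    (u ∈ C1 → w ∈ V1 \ φ1 '' C → glueEdge C V1 φ1 φ2 edge1 edge2 u w = edge1 (φ1 u) w) ∧
    (u ∈ C2 → w ∈ V2 \ φ2 '' C → glueEdge C V1 φ1 φ2 edge1 edge2 u w = edge2 (φ2 u) w) := by
  have hV2 : ∀ {w}, w ∈ V2 \ φ2 '' C → w ∉ sideDomain C V1 φ1 := fun hw hw1 =>
    hCV2.notMem_of_mem_right hw.1 (mem_of_mem_sideDomain hV12 hw1 (Or.inr hw))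
  refine ⟨fun hu hw => ?_, fun hu hw => ?_, fun hu hw => ?_, fun hu hw => ?_, fun hu hw => ?_⟩
  · rw [glueEdge_of_mem_left (Or.inl hu) (Or.inl hw), toSide_of_mem hu, toSide_of_mem hw]
  · rw [glueEdge_of_mem_left (Or.inr hu) (Or.inr hw), toSide_of_mem_diff hCV1 hu,
      toSide_of_mem_diff hCV1 hw]
  · rw [glueEdge_of_notMem_left (hV2 hw), toSide_of_mem_diff hCV2 hu,
      toSide_of_mem_diff hCV2 hw]
  · have huC : u ∈ C := hC ▸ Or.inl hu
    rw [glueEdge_of_mem_left (Or.inl huC) (Or.inr hw), toSide_of_mem huC,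
      toSide_of_mem_diff hCV1 hw]
  · have huC : u ∈ C := hC ▸ Or.inr hu
    rw [glueEdge_of_notMem_left (hV2 hw), toSide_of_mem huC, toSide_of_mem_diff hCV2 hw]

end Glue

theorem csan_glueing_general {U Q : Type*} [Fintype U]
    (V1 V2 C1 C2 : Set U)
    (hV12 : Disjoint V1 V2)
    (hCV1 : Disjoint (C1 ∪ C2) V1) (hCV2 : Disjoint (C1 ∪ C2) V2)
    (A1 A2 : U → U → Bool)
    (lab1 lab2 : U → Q × Multiset Q → Q)
    (edge1 edge2 : U → U → Q → Q)
    (hA1symm : ∀ u v, A1 u v = A1 v u) (hA2symm : ∀ u v, A2 u v = A2 v u)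
    (hA1supp : ∀ u v, A1 u v = true → u ∈ V1 ∧ v ∈ V1)
    (hA2supp : ∀ u v, A2 u v = true → u ∈ V2 ∧ v ∈ V2)
    (hedge1symm : ∀ u v, edge1 u v = edge1 v u)
    (hedge2symm : ∀ u v, edge2 u v = edge2 v u)
    (φ1 φ2 : U → U)
    (hφ1inj : Set.InjOn φ1 (C1 ∪ C2)) (hφ2inj : Set.InjOn φ2 (C1 ∪ C2))
    (hφ1maps : Set.MapsTo φ1 (C1 ∪ C2) V1) (hφ2maps : Set.MapsTo φ2 (C1 ∪ C2) V2)
    -- (a) the induced labeled graphs on the two copies of `C` coincide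
    (haAdj : ∀ u ∈ C1 ∪ C2, ∀ w ∈ C1 ∪ C2, A1 (φ1 u) (φ1 w) = A2 (φ2 u) (φ2 w))
    (haLab : ∀ u ∈ C1 ∪ C2, lab1 (φ1 u) = lab2 (φ2 u))
    (haEdge : ∀ u ∈ C1 ∪ C2, ∀ w ∈ C1 ∪ C2,
      A1 (φ1 u) (φ1 w) = true → edge1 (φ1 u) (φ1 w) = edge2 (φ2 u) (φ2 w))
    -- (b) and (c)
    (hb : ∀ u ∈ C2, ∀ w, A1 w (φ1 u) = true → w ∈ φ1 '' (C1 ∪ C2))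
    (hc : ∀ u ∈ C1, ∀ w, A2 w (φ2 u) = true → w ∈ φ2 '' (C1 ∪ C2))
    -- the glueing data
    (V' : Set U)
    (hV' : V' = (C1 ∪ C2) ∪ (V1 \ φ1 '' (C1 ∪ C2)) ∪ (V2 \ φ2 '' (C1 ∪ C2)))
    (α : U → U)
    (hα1 : ∀ v ∈ C1, α v = φ1 v) (hα2 : ∀ v ∈ C2, α v = φ2 v)
    (hα3 : ∀ v, v ∉ C1 ∪ C2 → α v = v)
    (ρ1' ρ2' : (U → Q) → (U → Q))
    (hρ1C : ∀ (x : U → Q), ∀ c ∈ C1 ∪ C2, ρ1' x (φ1 c) = x c)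
    (hρ1o : ∀ (x : U → Q), ∀ v, v ∉ φ1 '' (C1 ∪ C2) → ρ1' x v = x v)
    (hρ2C : ∀ (x : U → Q), ∀ c ∈ C1 ∪ C2, ρ2' x (φ2 c) = x c)
    (hρ2o : ∀ (x : U → Q), ∀ v, v ∉ φ2 '' (C1 ∪ C2) → ρ2' x v = x v)
    (F' : (U → Q) → (U → Q))
    (hF'1 : ∀ (x : U → Q), ∀ v ∈ V', α v ∈ V1 →
      F' x v = csanMap A1 lab1 edge1 (ρ1' x) (α v))
    (hF'2 : ∀ (x : U → Q), ∀ v ∈ V', α v ∈ V2 →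
      F' x v = csanMap A2 lab2 edge2 (ρ2' x) (α v)) :
    ∃ (A' : U → U → Bool) (lab' : U → Q × Multiset Q → Q) (edge' : U → U → Q → Q),
      -- `(G',λ',ρ')` is a CSAN: symmetric adjacency and edge labels
      (∀ u w, A' u w = A' w u) ∧
      (∀ u w, edge' u w = edge' w u) ∧
      -- the edges of `G'` are exactly as described
      (∀ u w, A' u w = true ↔
        ((u ∈ C1 ∪ C2 ∧ w ∈ C1 ∪ C2 ∧ A1 (φ1 u) (φ1 w) = true) ∨
         (u ∈ V1 \ φ1 '' (C1 ∪ C2) ∧ w ∈ V1 \ φ1 '' (C1 ∪ C2) ∧ A1 u w = true) ∨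
         (u ∈ V2 \ φ2 '' (C1 ∪ C2) ∧ w ∈ V2 \ φ2 '' (C1 ∪ C2) ∧ A2 u w = true) ∨
         (u ∈ C1 ∧ w ∈ V1 \ φ1 '' (C1 ∪ C2) ∧ A1 (φ1 u) w = true) ∨
         (w ∈ C1 ∧ u ∈ V1 \ φ1 '' (C1 ∪ C2) ∧ A1 (φ1 w) u = true) ∨
         (u ∈ C2 ∧ w ∈ V2 \ φ2 '' (C1 ∪ C2) ∧ A2 (φ2 u) w = true) ∨
         (w ∈ C2 ∧ u ∈ V2 \ φ2 '' (C1 ∪ C2) ∧ A2 (φ2 w) u = true))) ∧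
      -- vertex labels: `λ'(v) = λ_i(α(v))`
      (∀ v ∈ V', (α v ∈ V1 → lab' v = lab1 (α v)) ∧ (α v ∈ V2 → lab' v = lab2 (α v))) ∧
      -- edge labels are inherited correspondingly
      (∀ u w,
        (u ∈ C1 ∪ C2 → w ∈ C1 ∪ C2 → edge' u w = edge1 (φ1 u) (φ1 w)) ∧
        (u ∈ V1 \ φ1 '' (C1 ∪ C2) → w ∈ V1 \ φ1 '' (C1 ∪ C2) → edge' u w = edge1 u w) ∧
        (u ∈ V2 \ φ2 '' (C1 ∪ C2) → w ∈ V2 \ φ2 '' (C1 ∪ C2) → edge' u w = edge2 u w) ∧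
        (u ∈ C1 → w ∈ V1 \ φ1 '' (C1 ∪ C2) → edge' u w = edge1 (φ1 u) w) ∧
        (u ∈ C2 → w ∈ V2 \ φ2 '' (C1 ∪ C2) → edge' u w = edge2 (φ2 u) w)) ∧
      -- `F'` is the global map of the CSAN `(G',λ',ρ')` on `V'`
      (∀ (x : U → Q), ∀ v ∈ V', F' x v = csanMap A' lab' edge' x v) ∧
      -- every vertex of `G'` looks like a vertex of `G1` or of `G2`
      (∀ v ∈ V',
        (∃ u ∈ V1, lab' v = lab1 u ∧
          incidentLabels A' edge' v = incidentLabels A1 edge1 u) ∨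
        (∃ u ∈ V2, lab' v = lab2 u ∧
          incidentLabels A' edge' v = incidentLabels A2 edge2 u)) := by
  set C := C1 ∪ C2 with hC
  set A' := glueAdj C V1 V2 A1 A2 φ1 φ2
  set lab' := glueLab C V1 φ1 φ2 lab1 lab2
  set edge' := glueEdge C V1 φ1 φ2 edge1 edge2
  have hC1 : C1 ⊆ C := subset_union_left
  have hC2 : C2 ⊆ C := subset_union_right
  have side1 := fun v (hv : v ∈ C1 ∪ (V1 \ φ1 '' C)) =>
    glued_vertex_of_side (A' := A') (lab' := lab') (edge' := edge')
      (bijOn_toSide hφ1inj hφ1maps hCV1) (fun u w h => (hA1supp u w h).1)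
      (union_subset_union_left _ hC1 hv) (eqOn_toSide hC1 hCV1 hα1 hα3 hv)
      (glueAdj_eq_true_iff_left hC1 hCV1 hV12 hc haAdj hv)
      (fun u w h => glueEdge_of_mem_left h.1 h.2.1)
      (glueLab_of_mem_left (union_subset_union_left _ hC1 hv))
      (fun x => eqOn_comp_toSide hCV1 (hρ1C x) (hρ1o x))
  have side2 := fun v (hv : v ∈ C2 ∪ (V2 \ φ2 '' C)) =>
    glued_vertex_of_side (A' := A') (lab' := lab') (edge' := edge')
      (bijOn_toSide hφ2inj hφ2maps hCV2) (fun u w h => (hA2supp u w h).1)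
      (union_subset_union_left _ hC2 hv) (eqOn_toSide hC2 hCV2 hα2 hα3 hv)
      (glueAdj_eq_true_iff_right hC2 hCV2 hV12 hb haAdj hv)
      (fun u w h => glueEdge_of_sideAdj_right hV12 haAdj haEdge h)
      (glueLab_of_mem_right hV12 haLab (union_subset_union_left _ hC2 hv))
      (fun x => eqOn_comp_toSide hCV2 (hρ2C x) (hρ2o x))
  have hsides : ∀ v ∈ V', v ∈ C1 ∪ (V1 \ φ1 '' C) ∨ v ∈ C2 ∪ (V2 \ φ2 '' C) := by
    rw [hV']
    rintro v (((hv | hv) | hv) | hv)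
    exacts [Or.inl (Or.inl hv), Or.inr (Or.inl hv), Or.inl (Or.inr hv), Or.inr (Or.inr hv)]
  refine ⟨A', lab', edge', glueAdj_comm hA1symm hA2symm,
    fun u w => glueEdge_comm hedge1symm hedge2symm,
    glueAdj_eq_true_iff hC hCV1 hCV2 hA1symm hA2symm hb hc haAdj, fun v hv => ?_,
    fun u w => glueEdge_spec hC hCV1 hCV2 hV12, fun x v hv => ?_, fun v hv => ?_⟩
  · rcases hsides v hv with h | h
    · obtain ⟨hαV, hlab, -⟩ := side1 v h
      exact ⟨fun _ => hlab, fun h2 => absurd h2 (hV12.notMem_of_mem_left hαV)⟩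
    · obtain ⟨hαV, hlab, -⟩ := side2 v h
      exact ⟨fun h1 => absurd hαV (hV12.notMem_of_mem_left h1), fun _ => hlab⟩
  · rcases hsides v hv with h | h
    · exact (hF'1 x v hv (side1 v h).1).trans ((side1 v h).2.2.2 x).symm
    · exact (hF'2 x v hv (side2 v h).1).trans ((side2 v h).2.2.2 x).symm
  · rcases hsides v hv with h | h
    · exact Or.inl ⟨α v, (side1 v h).1, (side1 v h).2.1, (side1 v h).2.2.1⟩
    · exact Or.inr ⟨α v, (side2 v h).1, (side2 v h).2.1, (side2 v h).2.2.1⟩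

/-- **Glueing of CSANs** (paper's Lemma on glueing for CSAN).  Let `(G1,λ1,ρ1)` and
`(G2,λ2,ρ2)` be CSANs over the same finite alphabet `Q` on disjoint vertex sets
`V1, V2`, let `C = C1 ⊔ C2` be disjoint from `V1 ∪ V2` with injections
`φ1 : C → V1`, `φ2 : C → V2`, and assume: (a) the labeled graphs induced on `φ1(C)`
and `φ2(C)` coincide under the identification `φ1(v) ↔ φ2(v)`; (b) every
`G1`-neighbour of `φ1(C2)` lies in `φ1(C)`; (c) every `G2`-neighbour of `φ2(C1)`
lies in `φ2(C)`.  Then the glueing `F'` of the global maps `F1, F2` over `C`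
(characterized by the hypotheses on `α`, `ρ1', ρ2'`, `F'` below) is itself the global
map of a CSAN `(G',λ',ρ')` on `V' = C ∪ (V1 ∖ φ1(C)) ∪ (V2 ∖ φ2(C))` with the edges
and labels described in the conclusion; in particular every vertex of `G'` carries the
same vertex label and the same multiset of incident edge labels as some vertex of
`G1` or of `G2`. -/
theorem csan_glueing {U Q : Type*} [Fintype U] [Finite Q]
    (V1 V2 C1 C2 : Set U)
    (hV12 : Disjoint V1 V2)
    (hCV1 : Disjoint (C1 ∪ C2) V1) (hCV2 : Disjoint (C1 ∪ C2) V2)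
    (hC12 : Disjoint C1 C2)
    (A1 A2 : U → U → Bool)
    (lab1 lab2 : U → Q × Multiset Q → Q)
    (edge1 edge2 : U → U → Q → Q)
    (hA1symm : ∀ u v, A1 u v = A1 v u) (hA2symm : ∀ u v, A2 u v = A2 v u)
    (hA1loop : ∀ v, A1 v v = false) (hA2loop : ∀ v, A2 v v = false)
    (hA1supp : ∀ u v, A1 u v = true → u ∈ V1 ∧ v ∈ V1)
    (hA2supp : ∀ u v, A2 u v = true → u ∈ V2 ∧ v ∈ V2)
    (hedge1symm : ∀ u v, edge1 u v = edge1 v u)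
    (hedge2symm : ∀ u v, edge2 u v = edge2 v u)
    (φ1 φ2 : U → U)
    (hφ1inj : Set.InjOn φ1 (C1 ∪ C2)) (hφ2inj : Set.InjOn φ2 (C1 ∪ C2))
    (hφ1maps : Set.MapsTo φ1 (C1 ∪ C2) V1) (hφ2maps : Set.MapsTo φ2 (C1 ∪ C2) V2)
    -- (a) the induced labeled graphs on the two copies of `C` coincide
    (haAdj : ∀ u ∈ C1 ∪ C2, ∀ w ∈ C1 ∪ C2, A1 (φ1 u) (φ1 w) = A2 (φ2 u) (φ2 w))
    (haLab : ∀ u ∈ C1 ∪ C2, lab1 (φ1 u) = lab2 (φ2 u))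
    (haEdge : ∀ u ∈ C1 ∪ C2, ∀ w ∈ C1 ∪ C2,
      A1 (φ1 u) (φ1 w) = true → edge1 (φ1 u) (φ1 w) = edge2 (φ2 u) (φ2 w))
    -- (b) and (c)
    (hb : ∀ u ∈ C2, ∀ w, A1 w (φ1 u) = true → w ∈ φ1 '' (C1 ∪ C2))
    (hc : ∀ u ∈ C1, ∀ w, A2 w (φ2 u) = true → w ∈ φ2 '' (C1 ∪ C2))
    -- the glueing data
    (V' : Set U)
    (hV' : V' = (C1 ∪ C2) ∪ (V1 \ φ1 '' (C1 ∪ C2)) ∪ (V2 \ φ2 '' (C1 ∪ C2)))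
    (α : U → U)
    (hα1 : ∀ v ∈ C1, α v = φ1 v) (hα2 : ∀ v ∈ C2, α v = φ2 v)
    (hα3 : ∀ v, v ∉ C1 ∪ C2 → α v = v)
    (ρ1' ρ2' : (U → Q) → (U → Q))
    (hρ1C : ∀ (x : U → Q), ∀ c ∈ C1 ∪ C2, ρ1' x (φ1 c) = x c)
    (hρ1o : ∀ (x : U → Q), ∀ v, v ∉ φ1 '' (C1 ∪ C2) → ρ1' x v = x v)
    (hρ2C : ∀ (x : U → Q), ∀ c ∈ C1 ∪ C2, ρ2' x (φ2 c) = x c)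
    (hρ2o : ∀ (x : U → Q), ∀ v, v ∉ φ2 '' (C1 ∪ C2) → ρ2' x v = x v)
    (F' : (U → Q) → (U → Q))
    (hF'1 : ∀ (x : U → Q), ∀ v ∈ V', α v ∈ V1 →
      F' x v = csanMap A1 lab1 edge1 (ρ1' x) (α v))
    (hF'2 : ∀ (x : U → Q), ∀ v ∈ V', α v ∈ V2 →
      F' x v = csanMap A2 lab2 edge2 (ρ2' x) (α v)) :
    ∃ (A' : U → U → Bool) (lab' : U → Q × Multiset Q → Q) (edge' : U → U → Q → Q),
      -- `(G',λ',ρ')` is a CSAN: symmetric adjacency and edge labels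
      (∀ u w, A' u w = A' w u) ∧
      (∀ u w, edge' u w = edge' w u) ∧
      -- the edges of `G'` are exactly as described
      (∀ u w, A' u w = true ↔
        ((u ∈ C1 ∪ C2 ∧ w ∈ C1 ∪ C2 ∧ A1 (φ1 u) (φ1 w) = true) ∨
         (u ∈ V1 \ φ1 '' (C1 ∪ C2) ∧ w ∈ V1 \ φ1 '' (C1 ∪ C2) ∧ A1 u w = true) ∨
         (u ∈ V2 \ φ2 '' (C1 ∪ C2) ∧ w ∈ V2 \ φ2 '' (C1 ∪ C2) ∧ A2 u w = true) ∨
         (u ∈ C1 ∧ w ∈ V1 \ φ1 '' (C1 ∪ C2) ∧ A1 (φ1 u) w = true) ∨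
         (w ∈ C1 ∧ u ∈ V1 \ φ1 '' (C1 ∪ C2) ∧ A1 (φ1 w) u = true) ∨
         (u ∈ C2 ∧ w ∈ V2 \ φ2 '' (C1 ∪ C2) ∧ A2 (φ2 u) w = true) ∨
         (w ∈ C2 ∧ u ∈ V2 \ φ2 '' (C1 ∪ C2) ∧ A2 (φ2 w) u = true))) ∧
      -- vertex labels: `λ'(v) = λ_i(α(v))`
      (∀ v ∈ V', (α v ∈ V1 → lab' v = lab1 (α v)) ∧ (α v ∈ V2 → lab' v = lab2 (α v))) ∧
      -- edge labels are inherited correspondingly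
      (∀ u w,
        (u ∈ C1 ∪ C2 → w ∈ C1 ∪ C2 → edge' u w = edge1 (φ1 u) (φ1 w)) ∧
        (u ∈ V1 \ φ1 '' (C1 ∪ C2) → w ∈ V1 \ φ1 '' (C1 ∪ C2) → edge' u w = edge1 u w) ∧
        (u ∈ V2 \ φ2 '' (C1 ∪ C2) → w ∈ V2 \ φ2 '' (C1 ∪ C2) → edge' u w = edge2 u w) ∧
        (u ∈ C1 → w ∈ V1 \ φ1 '' (C1 ∪ C2) → edge' u w = edge1 (φ1 u) w) ∧
        (u ∈ C2 → w ∈ V2 \ φ2 '' (C1 ∪ C2) → edge' u w = edge2 (φ2 u) w)) ∧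
      -- `F'` is the global map of the CSAN `(G',λ',ρ')` on `V'`
      (∀ (x : U → Q), ∀ v ∈ V', F' x v = csanMap A' lab' edge' x v) ∧
      -- every vertex of `G'` looks like a vertex of `G1` or of `G2`
      (∀ v ∈ V',
        (∃ u ∈ V1, lab' v = lab1 u ∧
          incidentLabels A' edge' v = incidentLabels A1 edge1 u) ∨
        (∃ u ∈ V2, lab' v = lab2 u ∧
          incidentLabels A' edge' v = incidentLabels A2 edge2 u)) :=
  csan_glueing_general V1 V2 C1 C2 hV12 hCV1 hCV2 A1 A2 lab1 lab2 edge1 edge2 hA1symm hA2symm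
    hA1supp hA2supp hedge1symm hedge2symm φ1 φ2 hφ1inj hφ2inj hφ1maps hφ2maps haAdj haLab haEdge hb
    hc V' hV' α hα1 hα2 hα3 ρ1' ρ2' hρ1C hρ1o hρ2C hρ2o F' hF'1 hF'2
end
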